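/- arXiv:1110.2708 — 4 statements merged into one kernel-verified Lean document; each statement's English description precedes it below -/
import Mathlib

section
/- Let Γ be a finite simplicial graph that is not complete and has more than one vertex, and suppose Γ contains no induced cycle of length 4 or more (i.e., Γ is chordal). Then Γ can be written as the union of two proper induced subgraphs Γ₁ and Γ₂ whose intersection Γ₁₂ is either a complete graph or empty. -/
variable {V : Type*}

open scoped commutatorElement

def graphProductRels (Γ : SimpleGraph V) (G : V → Type*) [∀ v, Group (G v)] :
    Set (Monoid.CoprodI G) :=
  {x | ∃ (u v : V) (_ : Γ.Adj u v) (a : G u) (b : G v),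
    x = ⁅Monoid.CoprodI.of a, Monoid.CoprodI.of b⁆}

def GraphProduct (Γ : SimpleGraph V) (G : V → Type*) [∀ v, Group (G v)] : Type _ :=
  Monoid.CoprodI G ⧸ Subgroup.normalClosure (graphProductRels Γ G)

instance (Γ : SimpleGraph V) (G : V → Type*) [∀ v, Group (G v)] :
    Group (GraphProduct Γ G) :=
  QuotientGroup.Quotient.group _

/-- The canonical map from a vertex group into the graph product. -/
def GraphProduct.of (Γ : SimpleGraph V) (G : V → Type*) [∀ v, Group (G v)] {v : V} :
    G v →* GraphProduct Γ G :=
  (QuotientGroup.mk' _).comp Monoid.CoprodI.of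

/-- `Γ` has an induced cycle of length `n`: an injective map from `ZMod n` such that
adjacency holds exactly between consecutive elements. -/
def HasInducedCycle (Γ : SimpleGraph V) (n : ℕ) : Prop :=
  ∃ c : ZMod n → V, Function.Injective c ∧
    ∀ i j : ZMod n, Γ.Adj (c i) (c j) ↔ (j = i + 1 ∨ i = j + 1)

/-- A group is right-orderable if it has a linear order invariant under right multiplication. -/
def RightOrderable (G : Type*) [Group G] : Prop :=
  ∃ le : G → G → Prop, IsLinearOrder G le ∧ ∀ a b c : G, le a b → le (a * c) (b * c)

/-!
Pick non-adjacent vertices `a`, `b` and let `C` be the component of `b` in `Γ` minus the closed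
neighbourhood of `a`. Then `C ∪ ∂C` and `V \ C` cover `Γ` and meet in the outer boundary `∂C`,
all of whose vertices are adjacent to `a`. Two non-adjacent vertices of `∂C` would be joined by a
shortest path through `C`, which together with `a` forms an induced cycle of length at least four.
-/

lemma ZMod.eq_add_one_iff_val {n : ℕ} [NeZero n] (i j : ZMod n) :
    j = i + 1 ↔ j.val = i.val + 1 ∨ (i.val + 1 = n ∧ j.val = 0) := by
  have hi := i.val_lt
  have hj := j.val_lt
  rw [← (ZMod.val_injective n).eq_iff, ZMod.val_add, ZMod.val_one_eq_one_mod, Nat.add_mod_mod]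
  rcases (Nat.succ_le_of_lt hi).lt_or_eq with h | h
  · rw [Nat.mod_eq_of_lt h]; omega
  · rw [← Nat.succ_eq_add_one, h, Nat.mod_self]; omega

lemma hasInducedCycle_of_injOn (G : SimpleGraph V) {n : ℕ} [NeZero n] (c : ℕ → V)
    (hinj : Set.InjOn c (Set.Iio n))
    (hadj : ∀ x < n, ∀ y < n, G.Adj (c x) (c y) ↔
      (y = x + 1 ∨ (x + 1 = n ∧ y = 0)) ∨ (x = y + 1 ∨ (y + 1 = n ∧ x = 0))) :
    HasInducedCycle G n := by
  refine ⟨fun i => c i.val, fun i j hij => ZMod.val_injective n (hinj i.val_lt j.val_lt hij),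
    fun i j => ?_⟩
  rw [ZMod.eq_add_one_iff_val, ZMod.eq_add_one_iff_val]
  exact hadj _ i.val_lt _ j.val_lt

lemma hasInducedCycle_of_path_of_apex (G : SimpleGraph V) {L : ℕ} {f : ℕ → V} {a : V}
    (hinj : Set.InjOn f (Set.Iic L))
    (hpath : ∀ i ≤ L, ∀ j ≤ L, G.Adj (f i) (f j) ↔ j = i + 1 ∨ i = j + 1)
    (hne : ∀ i ≤ L, f i ≠ a) (hapex : ∀ i ≤ L, G.Adj a (f i) ↔ i = 0 ∨ i = L) :
    HasInducedCycle G (L + 2) := by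
  refine hasInducedCycle_of_injOn G (fun x => if x ≤ L then f x else a) ?_ ?_
  · intro x hx y hy hxy
    simp only [Set.mem_Iio] at hx hy
    dsimp only at hxy
    split_ifs at hxy with h₁ h₂ h₂
    · exact hinj h₁ h₂ hxy
    · exact absurd hxy (hne x h₁)
    · exact absurd hxy.symm (hne y h₂)
    · omega
  · intro x hx y hy
    split_ifs with h₁ h₂ h₂
    · rw [hpath x h₁ y h₂]; omega
    · rw [G.adj_comm, hapex x h₁]; omega
    · rw [hapex y h₂]; omega
    · simp only [SimpleGraph.irrefl, false_iff]; omega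

namespace SimpleGraph

variable {G : SimpleGraph V} {u v w : V} {C s : Set V}

lemma Walk.eq_add_one_of_adj_getVert {p : G.Walk u v} (hp : p.length = G.dist u v) {i j : ℕ}
    (hij : i < j) (hj : j ≤ p.length) (hadj : G.Adj (p.getVert i) (p.getVert j)) :
    j = i + 1 := by
  have := G.dist_le ((p.take i).append (.cons hadj (p.drop j)))
  simp only [Walk.length_append, Walk.length_cons, Walk.take_length, Walk.drop_length] at this
  omega

lemma Walk.adj_getVert_iff_of_length_eq_dist {p : G.Walk u v} (hp : p.length = G.dist u v)
    {i j : ℕ} (hi : i ≤ p.length) (hj : j ≤ p.length) :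
    G.Adj (p.getVert i) (p.getVert j) ↔ j = i + 1 ∨ i = j + 1 := by
  refine ⟨fun hadj => ?_, ?_⟩
  · rcases lt_trichotomy i j with h | rfl | h
    · exact .inl (p.eq_add_one_of_adj_getVert hp h hj hadj)
    · exact absurd hadj (G.irrefl)
    · exact .inr (p.eq_add_one_of_adj_getVert hp h hi hadj.symm)
  · rintro (rfl | rfl)
    · exact p.adj_getVert_succ (by omega)
    · exact (p.adj_getVert_succ (by omega)).symm

lemma Reachable.exists_induced_path (h : G.Reachable u v) :
    ∃ (L : ℕ) (f : ℕ → V), f 0 = u ∧ f L = v ∧ Set.InjOn f (Set.Iic L) ∧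
      ∀ i ≤ L, ∀ j ≤ L, G.Adj (f i) (f j) ↔ j = i + 1 ∨ i = j + 1 := by
  obtain ⟨p, hp⟩ := h.exists_walk_length_eq_dist
  exact ⟨p.length, p.getVert, p.getVert_zero, p.getVert_length,
    (p.isPath_of_length_eq_dist hp).getVert_injOn,
    fun i hi j hj => p.adj_getVert_iff_of_length_eq_dist hp hi hj⟩

def outerBoundary (G : SimpleGraph V) (C : Set V) : Set V :=
  {v | v ∉ C ∧ ∃ c ∈ C, G.Adj c v}

lemma union_outerBoundary_inter_compl :
    (C ∪ G.outerBoundary C) ∩ Cᶜ = G.outerBoundary C := by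
  ext v
  simp only [outerBoundary, Set.mem_inter_iff, Set.mem_union, Set.mem_compl_iff,
    Set.mem_ofPred_eq]
  tauto

lemma adj_mem_union_outerBoundary_or_mem_compl (h : G.Adj u v) :
    (u ∈ C ∪ G.outerBoundary C ∧ v ∈ C ∪ G.outerBoundary C) ∨ (u ∈ Cᶜ ∧ v ∈ Cᶜ) := by
  by_cases hu : u ∈ C
  · by_cases hv : v ∈ C
    · exact .inl ⟨.inl hu, .inl hv⟩
    · exact .inl ⟨.inl hu, .inr ⟨hv, u, hu, h⟩⟩
  · by_cases hv : v ∈ C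
    · exact .inl ⟨.inr ⟨hu, v, hv, h.symm⟩, .inl hv⟩
    · exact .inr ⟨hu, hv⟩

lemma exists_induced_path_through (hC : (G.induce C).Preconnected)
    (hu : u ∈ G.outerBoundary C) (hw : w ∈ G.outerBoundary C) :
    ∃ (L : ℕ) (f : ℕ → V), f 0 = u ∧ f L = w ∧ (∀ i, f i ∈ insert u (insert w C)) ∧
      Set.InjOn f (Set.Iic L) ∧ ∀ i ≤ L, ∀ j ≤ L, G.Adj (f i) (f j) ↔ j = i + 1 ∨ i = j + 1 := by
  obtain ⟨cu, hcu, hcuu⟩ := hu.2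
  obtain ⟨cw, hcw, hcww⟩ := hw.2
  set T : Set V := insert u (insert w C)
  have hCT : C ⊆ T := fun c hc => .inr (.inr hc)
  have hu' : (G.induce T).Adj ⟨u, .inl rfl⟩ ⟨cu, hCT hcu⟩ := hcuu.symm
  have hw' : (G.induce T).Adj ⟨cw, hCT hcw⟩ ⟨w, .inr (.inl rfl)⟩ := hcww
  have hreach : (G.induce T).Reachable ⟨u, .inl rfl⟩ ⟨w, .inr (.inl rfl)⟩ := hu'.reachable.trans
    (((hC ⟨cu, hcu⟩ ⟨cw, hcw⟩).map (induceHomOfLE G hCT).toHom).trans hw'.reachable)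
  obtain ⟨L, f, hf0, hfL, hinj, hpath⟩ := hreach.exists_induced_path
  exact ⟨L, fun i => f i, congrArg Subtype.val hf0, congrArg Subtype.val hfL, fun i => (f i).2,
    Subtype.val_injective.comp_injOn hinj, hpath⟩

lemma isClique_outerBoundary (hchordal : ∀ n : ℕ, 4 ≤ n → ¬ HasInducedCycle G n)
    (hC : (G.induce C).Preconnected) {a : V} (haC : a ∉ C) (hnadj : ∀ c ∈ C, ¬ G.Adj a c)
    (hadj : ∀ v ∈ G.outerBoundary C, G.Adj a v) : G.IsClique (G.outerBoundary C) := by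
  rintro u hu w hw huw
  by_contra huw'
  -- a shortest `u`–`w` path through `C`, closed up by `a`, is an induced cycle of length ≥ 4
  obtain ⟨L, f, hf0, hfL, hfT, hinj, hpath⟩ := exists_induced_path_through hC hu hw
  have hL : 2 ≤ L := by
    rcases Nat.lt_or_ge L 2 with h | h
    · interval_cases L
      · exact absurd (hf0.symm.trans hfL) huw
      · exact absurd (by simpa [hf0, hfL] using (hpath 0 (by omega) 1 le_rfl).2 (.inl rfl)) huw'
    · exact h
  have hfa : ∀ i, f i ≠ a := by
    intro i h
    rcases h ▸ hfT i with rfl | rfl | h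
    · exact G.irrefl (hadj _ hu)
    · exact G.irrefl (hadj _ hw)
    · exact haC h
  have hapex : ∀ i ≤ L, G.Adj a (f i) ↔ i = 0 ∨ i = L := by
    refine fun i hi => ⟨fun h => ?_, ?_⟩
    · by_contra hi'
      rw [not_or] at hi'
      rcases hfT i with hu' | hw' | hc
      · exact hi'.1 (hinj hi (Set.mem_Iic.2 L.zero_le) (hu'.trans hf0.symm))
      · exact hi'.2 (hinj hi (Set.mem_Iic.2 le_rfl) (hw'.trans hfL.symm))
      · exact hnadj _ hc h
    · rintro (rfl | rfl)
      · simpa [hf0] using hadj u hu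
      · simpa [hfL] using hadj w hw
  exact hchordal (L + 2) (by omega)
    (hasInducedCycle_of_path_of_apex G hinj hpath (fun i _ => hfa i) hapex)

lemma exists_maximal_connected_induce {b : V} (hb : b ∈ s) :
    ∃ C, b ∈ C ∧ Maximal (fun S => S ⊆ s ∧ (G.induce S).Connected) C := by
  set P : Set (Set V) := {S | S ⊆ s ∧ (G.induce S).Connected}
  have hsingleton : (G.induce {b}).Connected :=
    (connected_iff _).2 ⟨.of_subsingleton, ⟨⟨b, rfl⟩⟩⟩
  have hchain : ∀ c ⊆ P, IsChain (· ⊆ ·) c → c.Nonempty → ∃ ub ∈ P, ∀ S ∈ c, S ⊆ ub := by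
    intro c hcP hc hne
    have hnonempty : ∀ S ∈ c, S.Nonempty := fun S hS =>
      Set.nonempty_coe_sort.1 (hcP hS).2.nonempty
    refine ⟨⋃₀ c, ⟨Set.sUnion_subset fun S hS => (hcP hS).1,
      induce_sUnion_connected_of_pairwise_not_disjoint hne (fun hS hT => ?_)
        fun hS => (hcP hS).2⟩, fun S hS => Set.subset_sUnion_of_mem hS⟩
    rcases hc.total hS hT with h | h
    · exact (Set.inter_eq_left.2 h).symm ▸ hnonempty _ hS
    · exact (Set.inter_eq_right.2 h).symm ▸ hnonempty _ hT
  obtain ⟨C, hbC, hC⟩ := zorn_subset_nonempty P hchain {b}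
    ⟨Set.singleton_subset_iff.2 hb, hsingleton⟩
  exact ⟨C, hbC rfl, hC⟩

lemma outerBoundary_subset_compl_of_maximal
    (hC : Maximal (fun S => S ⊆ s ∧ (G.induce S).Connected) C) :
    G.outerBoundary C ⊆ sᶜ := by
  rintro v ⟨hvC, c, hc, hcv⟩ hvs
  have hsingleton : (G.induce {v}).Connected :=
    (connected_iff _).2 ⟨.of_subsingleton, ⟨⟨v, rfl⟩⟩⟩
  exact hvC (hC.2 ⟨Set.union_subset hC.1.1 (Set.singleton_subset_iff.2 hvs),
    connected_induce_union hC.1.2.preconnected hsingleton.preconnected hc rfl hcv⟩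
    Set.subset_union_left (.inr rfl))

end SimpleGraph

theorem stmt0_general {V : Type*} (Γ : SimpleGraph V)
    (hncomplete : ¬ ∀ u v : V, u ≠ v → Γ.Adj u v)
    (hchordal : ∀ n : ℕ, 4 ≤ n → ¬ HasInducedCycle Γ n) :
    ∃ A B : Set V, A ∪ B = Set.univ ∧ A ≠ Set.univ ∧ B ≠ Set.univ ∧
      (∀ u v : V, Γ.Adj u v → (u ∈ A ∧ v ∈ A) ∨ (u ∈ B ∧ v ∈ B)) ∧
      (A ∩ B = ∅ ∨ ∀ u ∈ A ∩ B, ∀ w ∈ A ∩ B, u ≠ w → Γ.Adj u w) := by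
  obtain ⟨a, b, hab, hnab⟩ : ∃ a b, a ≠ b ∧ ¬ Γ.Adj a b := by simpa using hncomplete
  -- `C` is the component of `b` in the graph with the closed neighbourhood of `a` removed
  obtain ⟨C, hbC, hC⟩ := SimpleGraph.exists_maximal_connected_induce (G := Γ)
    (show b ∈ (insert a (Γ.neighborSet a))ᶜ by simp [hab.symm, hnab])
  have hnadj : ∀ c ∈ C, ¬ Γ.Adj a c := fun c hc h => hC.1.1 hc (.inr h)
  have haC : a ∉ C := fun h => hC.1.1 h (.inl rfl)
  have haB : a ∉ Γ.outerBoundary C := fun ⟨_, c, hc, h⟩ => hnadj c hc h.symm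
  have hadj : ∀ v ∈ Γ.outerBoundary C, Γ.Adj a v := fun v hv => by
    simpa [ne_of_mem_of_not_mem hv haB] using
      SimpleGraph.outerBoundary_subset_compl_of_maximal hC hv
  refine ⟨C ∪ Γ.outerBoundary C, Cᶜ, ?_, fun h => ?_, fun h => ?_,
    fun u v => SimpleGraph.adj_mem_union_outerBoundary_or_mem_compl, .inr ?_⟩
  · rw [Set.union_right_comm, Set.union_compl_self, Set.univ_union]
  · exact (h ▸ Set.mem_univ a : a ∈ C ∪ Γ.outerBoundary C).elim haC haB
  · exact (h ▸ Set.mem_univ b : b ∈ Cᶜ) hbC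
  · rw [SimpleGraph.union_outerBoundary_inter_compl]
    exact SimpleGraph.isClique_outerBoundary hchordal hC.1.2.preconnected haC hnadj hadj

/-- A finite incomplete chordal graph with more than one vertex splits as a union of two
proper induced subgraphs whose intersection is complete or empty. -/
theorem stmt0 {V : Type*} [Fintype V] (Γ : SimpleGraph V)
    (hncomplete : ¬ ∀ u v : V, u ≠ v → Γ.Adj u v)
    (hcard : 1 < Fintype.card V)
    (hchordal : ∀ n : ℕ, 4 ≤ n → ¬ HasInducedCycle Γ n) :
    ∃ A B : Set V, A ∪ B = Set.univ ∧ A ≠ Set.univ ∧ B ≠ Set.univ ∧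
      (∀ u v : V, Γ.Adj u v → (u ∈ A ∧ v ∈ A) ∨ (u ∈ B ∧ v ∈ B)) ∧
      (A ∩ B = ∅ ∨ ∀ u ∈ A ∩ B, ∀ w ∈ A ∩ B, u ≠ w → Γ.Adj u w) :=
  stmt0_general Γ hncomplete hchordal
end

section
/- Let Γ be a (possibly infinite) simplicial graph with finite chromatic number m, and let G = 𝒢(Γ; G_v) be a graph product of groups over Γ. Then there is a subnormal series G = G₀ ⊳ G₁ ⊳ ⋯ ⊳ G_m = 1 such that each factor G_{i−1}/G_i is isomorphic to a free product of copies of vertex groups G_v. -/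
variable {V : Type*}

open scoped commutatorElement

universe u

/-!
Colour `Γ` with `0, …, m - 1`, let `S k` be the set of vertices of colour `< k`, and let `s k` be
the kernel of the retraction of the graph product onto the graph product `𝒢(S k)` over `S k`. Then
`s 0 = ⊤` and `s m = ⊥`. If `I` is the colour class `k`, the retraction `𝒢(S k ∪ I) → 𝒢(S k)`
splits as `𝒢(S k ∪ I) ≅ K ⋊ 𝒢(S k)`, where `K` is the free product of the conjugates `g G_v g⁻¹`
for `v ∈ I` and `g ∈ 𝒢(S k)`. Such a conjugate only depends on the coset of `g` modulo the subgroup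
generated by the vertex groups adjacent to `v`, so `K` has one copy of `G_v` for each of these
cosets. Since `I` is independent, sending the vertices of `I` into `K` respects the commutation
relations. Hence `s k / s (k + 1) ≅ K`.
-/

namespace SemidirectProduct

variable {N H K : Type*} [Group N] [Group H] [Group K] {φ : H →* MulAut N}

theorem commute_inr_inl {h : H} {n : N} (hn : φ h n = n) :
    Commute (inr h : N ⋊[φ] H) (inl n) := by
  show inr h * inl n = inl n * inr h
  ext <;> simp [hn]

def leftOnKer (Φ : K →* N ⋊[φ] H) : (rightHom.comp Φ).ker →* N where
  toFun x := (Φ x).left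
  map_one' := by simp
  map_mul' x y := by
    have hx : (Φ x).right = 1 := x.2
    simp [hx]

theorem leftOnKer_surjective {Φ : K →* N ⋊[φ] H} (hΦ : Function.Surjective Φ) :
    Function.Surjective (leftOnKer Φ) := by
  intro n
  obtain ⟨x, hx⟩ := hΦ (inl n)
  exact ⟨⟨x, by simp [hx]⟩, by simp [leftOnKer, hx]⟩

theorem ker_leftOnKer (Φ : K →* N ⋊[φ] H) :
    (leftOnKer Φ).ker = Φ.ker.subgroupOf (rightHom.comp Φ).ker := by
  ext x
  have hx : (Φ x).right = 1 := x.2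
  rw [MonoidHom.mem_ker, Subgroup.mem_subgroupOf, MonoidHom.mem_ker]
  exact ⟨fun h => SemidirectProduct.ext h hx, fun h => by simp [leftOnKer, h]⟩

end SemidirectProduct

namespace Monoid.CoprodI

variable {ι A : Type*} {X : ι → Type*} [Group A] [∀ i, MulAction A (X i)]
  (M : ι → Type*) [∀ i, Monoid (M i)]

def sigmaTranslate (a : A) :
    CoprodI (fun j : Σ i, X i => M j.1) →* CoprodI fun j : Σ i, X i => M j.1 :=
  lift fun j => of (M := fun j : Σ i, X i => M j.1) (i := ⟨j.1, a • j.2⟩)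

@[simp] theorem sigmaTranslate_of (a : A) (j : Σ i, X i) (m : M j.1) :
    sigmaTranslate M a (of (i := j) m) =
      of (M := fun j : Σ i, X i => M j.1) (i := ⟨j.1, a • j.2⟩) m :=
  lift_of _ _

theorem sigmaTranslate_mul (a b : A) :
    sigmaTranslate (X := X) M (a * b) = (sigmaTranslate M a).comp (sigmaTranslate M b) :=
  ext_hom _ _ fun j => by
    ext m
    simp only [MonoidHom.comp_apply, sigmaTranslate_of]
    rw [mul_smul]

theorem sigmaTranslate_one : sigmaTranslate (X := X) M (1 : A) = MonoidHom.id _ :=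
  ext_hom _ _ fun j => by
    ext m
    simp only [MonoidHom.comp_apply, sigmaTranslate_of, MonoidHom.id_apply]
    rw [one_smul]

def sigmaAction : A →* MulAut (CoprodI fun j : Σ i, X i => M j.1) where
  toFun a := MonoidHom.toMulEquiv (sigmaTranslate M a) (sigmaTranslate M a⁻¹)
    (by rw [← sigmaTranslate_mul, inv_mul_cancel, sigmaTranslate_one])
    (by rw [← sigmaTranslate_mul, mul_inv_cancel, sigmaTranslate_one])
  map_one' := MulEquiv.ext fun x => by simp [sigmaTranslate_one]
  map_mul' a b := MulEquiv.ext fun x => by simp [sigmaTranslate_mul]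

@[simp] theorem sigmaAction_of (a : A) (j : Σ i, X i) (m : M j.1) :
    sigmaAction M a (of (i := j) m) =
      of (M := fun j : Σ i, X i => M j.1) (i := ⟨j.1, a • j.2⟩) m :=
  sigmaTranslate_of M a j m

end Monoid.CoprodI

namespace GraphProduct

open Monoid SemidirectProduct

variable {Γ : SimpleGraph V} {G : V → Type*} [∀ v, Group (G v)]

section Restriction

variable {H : Type*} [Group H] {S T : Set V}

theorem commute_of_adj {u v : V} (h : Γ.Adj u v) (a : G u) (b : G v) :
    Commute (of Γ G a) (of Γ G b) := by
  rw [← commutatorElement_eq_one_iff_commute]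
  exact (QuotientGroup.eq_one_iff _).2 (Subgroup.subset_normalClosure ⟨u, v, h, a, b, rfl⟩)

def lift (φ : ∀ v, G v →* H) (hφ : ∀ u v, Γ.Adj u v → ∀ a b, Commute (φ u a) (φ v b)) :
    GraphProduct Γ G →* H :=
  QuotientGroup.lift _ (CoprodI.lift φ) <| Subgroup.normalClosure_le_normal <| by
    rintro _ ⟨u, v, huv, a, b, rfl⟩
    simpa [commutatorElement_eq_one_iff_commute] using hφ u v huv a b

@[simp] theorem lift_of (φ : ∀ v, G v →* H) (hφ) {v : V} (a : G v) :
    lift φ hφ (of Γ G a) = φ v a := rfl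

@[ext] theorem hom_ext {f g : GraphProduct Γ G →* H}
    (h : ∀ v, f.comp (of Γ G (v := v)) = g.comp (of Γ G)) : f = g :=
  QuotientGroup.monoidHom_ext _ (CoprodI.ext_hom _ _ h)

theorem subsingleton_of_isEmpty [IsEmpty V] : Subsingleton (GraphProduct Γ G) :=
  have : MonoidHom.id (GraphProduct Γ G) = 1 := hom_ext isEmptyElim
  subsingleton_of_forall_eq 1 (DFunLike.congr_fun this)

variable (Γ G) in
abbrev Induced (S : Set V) : Type _ := GraphProduct (Γ.induce S) fun v : S => G v

open scoped Classical in
noncomputable def restrict (S : Set V) : GraphProduct Γ G →* Induced Γ G S :=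
  lift (fun v => if h : v ∈ S then of (Γ.induce S) (fun v : S => G v) (v := ⟨v, h⟩) else 1)
    fun u v huv a b => by
      by_cases hu : u ∈ S
      · by_cases hv : v ∈ S
        · simpa [hu, hv] using commute_of_adj (Γ := Γ.induce S) (G := fun v : S => G v)
            (u := ⟨u, hu⟩) (v := ⟨v, hv⟩) huv a b
        · simp [hv]
      · simp [hu]

theorem restrict_of_mem {v : V} (h : v ∈ S) (a : G v) :
    restrict S (of Γ G a) = of (Γ.induce S) (fun v : S => G v) (v := ⟨v, h⟩) a := by
  simp [restrict, h]

theorem restrict_of_notMem {v : V} (h : v ∉ S) (a : G v) : restrict S (of Γ G a) = 1 := by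
  simp [restrict, h]

def inclusion (S : Set V) : Induced Γ G S →* GraphProduct Γ G :=
  lift (fun v => of Γ G (v := v)) fun _ _ huv => commute_of_adj huv

@[simp] theorem inclusion_of (v : S) (a : G v) :
    inclusion S (of (Γ.induce S) (fun v : S => G v) a) = of Γ G a := rfl

theorem restrict_comp_inclusion :
    (restrict S).comp (inclusion S) = MonoidHom.id (Induced Γ G S) := by
  ext v a
  simp [restrict_of_mem v.2]

theorem inclusion_injective : Function.Injective (inclusion (Γ := Γ) (G := G) S) :=
  Function.LeftInverse.injective (g := restrict S) (DFunLike.congr_fun restrict_comp_inclusion)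

theorem ker_restrict_eq_top (hS : ∀ v, v ∉ S) : (restrict (Γ := Γ) (G := G) S).ker = ⊤ :=
  have : IsEmpty S := ⟨fun v => hS v v.2⟩
  have := subsingleton_of_isEmpty (Γ := Γ.induce S) (G := fun v : S => G v)
  (Subgroup.eq_top_iff' _).2 fun _ => Subsingleton.elim _ _

theorem ker_restrict_eq_bot (hS : ∀ v, v ∈ S) : (restrict (Γ := Γ) (G := G) S).ker = ⊥ := by
  have : (inclusion S).comp (restrict S) = MonoidHom.id (GraphProduct Γ G) := by
    ext v a
    simp [restrict_of_mem (hS v)]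
  exact MonoidHom.ker_eq_bot _ (Function.LeftInverse.injective (DFunLike.congr_fun this))

theorem ker_restrict_anti (h : S ⊆ T) :
    (restrict (Γ := Γ) (G := G) T).ker ≤ (restrict S).ker := by
  have : ((restrict S).comp (inclusion T)).comp (restrict T) = restrict (Γ := Γ) (G := G) S := by
    ext v a
    by_cases hT : v ∈ T
    · by_cases hS : v ∈ S <;> simp [restrict_of_mem, restrict_of_notMem, hS, hT]
    · simp [restrict_of_notMem, hT, restrict_of_notMem (mt (@h v) hT)]
  intro x hx
  rw [MonoidHom.mem_ker, ← this, MonoidHom.comp_apply, hx, map_one]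

end Restriction

section Splitting

variable {S I : Set V}

variable (Γ G S) in
def link (v : V) : Subgroup (Induced Γ G S) :=
  ⨆ (u : S) (_ : Γ.Adj u v), (of (Γ.induce S) (fun v : S => G v) (v := u)).range

variable (Γ G S I) in
abbrev LinkCoset : Type _ := Σ v : I, Induced Γ G S ⧸ link Γ G S v

variable (Γ G S I) in
abbrev LinkCosetCoprod : Type _ := CoprodI fun j : LinkCoset Γ G S I => G j.1

variable (Γ G S I) in
abbrev linkCosetAction : Induced Γ G S →* MulAut (LinkCosetCoprod Γ G S I) :=
  CoprodI.sigmaAction fun v : I => G v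

variable (Γ G S I) in
abbrev LinkSemidirect : Type _ :=
  LinkCosetCoprod Γ G S I ⋊[linkCosetAction Γ G S I] Induced Γ G S

theorem of_mem_link {v : V} (u : S) (h : Γ.Adj u v) (a : G u) :
    of (Γ.induce S) (fun v : S => G v) a ∈ link Γ G S v :=
  Subgroup.mem_iSup_of_mem u (Subgroup.mem_iSup_of_mem h ⟨a, rfl⟩)

theorem commute_inclusion_of_mem_link {v : V} {z : Induced Γ G S} (hz : z ∈ link Γ G S v)
    (b : G v) : Commute (inclusion S z) (of Γ G b) := by
  suffices link Γ G S v ≤ (Subgroup.centralizer {of Γ G b}).comap (inclusion S) from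
    Subgroup.mem_centralizer_singleton_iff.1 (this hz)
  refine iSup₂_le fun u huv => ?_
  rintro _ ⟨a, rfl⟩
  exact Subgroup.mem_centralizer_singleton_iff.2 (commute_of_adj huv a b).eq

theorem conj_inclusion_of_eq {v : V} {x y : Induced Γ G S}
    (hxy : (x : Induced Γ G S ⧸ link Γ G S v) = y) (b : G v) :
    MulAut.conj (inclusion S x) (of Γ G b) = MulAut.conj (inclusion S y) (of Γ G b) := by
  have hfix : MulAut.conj (inclusion S (x⁻¹ * y)) (of Γ G b) = of Γ G b := by
    rw [MulAut.conj_apply, (commute_inclusion_of_mem_link (QuotientGroup.eq.mp hxy) b).eq,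
      mul_inv_cancel_right]
  rw [← mul_inv_cancel_left x y, map_mul, map_mul, MulAut.mul_apply, hfix]

variable (Γ G S I) in
noncomputable def ofLinkCosetCoprod : LinkCosetCoprod Γ G S I →* GraphProduct Γ G :=
  CoprodI.lift fun j => (MulAut.conj (inclusion S j.2.out)).toMonoidHom.comp (of Γ G (v := j.1))

theorem ofLinkCosetCoprod_of (j : LinkCoset Γ G S I) (b : G j.1) :
    ofLinkCosetCoprod Γ G S I (CoprodI.of (i := j) b) =
      MulAut.conj (inclusion S j.2.out) (of Γ G b) :=
  CoprodI.lift_of _ _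

theorem ofLinkCosetCoprod_comp_linkCosetAction (a : Induced Γ G S) :
    (ofLinkCosetCoprod Γ G S I).comp (linkCosetAction Γ G S I a).toMonoidHom =
      (MulAut.conj (inclusion S a)).toMonoidHom.comp (ofLinkCosetCoprod Γ G S I) := by
  refine CoprodI.ext_hom _ _ fun j => MonoidHom.ext fun b => ?_
  simp only [MonoidHom.comp_apply, MulEquiv.coe_toMonoidHom, CoprodI.sigmaAction_of,
    ofLinkCosetCoprod_of, ← MulAut.mul_apply, ← map_mul]
  refine conj_inclusion_of_eq ?_ b
  rw [QuotientGroup.out_eq']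
  exact (MulAction.Quotient.coe_smul_out _ a j.2).symm

variable (Γ G S I) in
noncomputable def ofSemidirect : LinkSemidirect Γ G S I →* GraphProduct Γ G :=
  SemidirectProduct.lift (ofLinkCosetCoprod Γ G S I) (inclusion S)
    ofLinkCosetCoprod_comp_linkCosetAction

theorem commute_inr_inl_of_mem_link {v : V} (hv : v ∈ I) {a : Induced Γ G S}
    (ha : a ∈ link Γ G S v) (b : G v) :
    Commute (inr a : LinkSemidirect Γ G S I)
      (inl (CoprodI.of (i := ⟨⟨v, hv⟩, (1 : Induced Γ G S)⟩) b)) := by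
  have hfix : a • ((1 : Induced Γ G S) : Induced Γ G S ⧸ link Γ G S v) = (1 : Induced Γ G S) := by
    rw [MulAction.Quotient.smul_coe, smul_eq_mul, mul_one, QuotientGroup.eq]
    simpa using inv_mem ha
  refine SemidirectProduct.commute_inr_inl ?_
  rw [CoprodI.sigmaAction_of, hfix]

variable (Γ G S I) in
open scoped Classical in
noncomputable def toSemidirectOfVertex (v : V) : G v →* LinkSemidirect Γ G S I :=
  if hS : v ∈ S then inr.comp (of (Γ.induce S) (fun v : S => G v) (v := ⟨v, hS⟩))
  else if hI : v ∈ I then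
    inl.comp (CoprodI.of (M := fun j : LinkCoset Γ G S I => G j.1)
      (i := ⟨⟨v, hI⟩, (1 : Induced Γ G S)⟩))
  else 1

theorem toSemidirectOfVertex_of_mem {v : V} (hS : v ∈ S) (b : G v) :
    toSemidirectOfVertex Γ G S I v b =
      inr (of (Γ.induce S) (fun v : S => G v) (v := ⟨v, hS⟩) b) := by
  simp [toSemidirectOfVertex, hS]

theorem toSemidirectOfVertex_of_notMem_of_mem {v : V} (hS : v ∉ S) (hI : v ∈ I) (b : G v) :
    toSemidirectOfVertex Γ G S I v b =
      inl (CoprodI.of (M := fun j : LinkCoset Γ G S I => G j.1)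
        (i := ⟨⟨v, hI⟩, (1 : Induced Γ G S)⟩) b) := by
  simp [toSemidirectOfVertex, hS, hI]

theorem toSemidirectOfVertex_of_notMem_of_notMem {v : V} (hS : v ∉ S) (hI : v ∉ I) (b : G v) :
    toSemidirectOfVertex Γ G S I v b = 1 := by
  simp [toSemidirectOfVertex, hS, hI]

theorem commute_toSemidirectOfVertex (hI : ∀ u ∈ I, ∀ v ∈ I, ¬Γ.Adj u v) {u v : V}
    (huv : Γ.Adj u v) (a : G u) (b : G v) :
    Commute (toSemidirectOfVertex Γ G S I u a) (toSemidirectOfVertex Γ G S I v b) := by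
  by_cases huS : u ∈ S <;> by_cases hvS : v ∈ S
  · simp only [toSemidirectOfVertex_of_mem huS, toSemidirectOfVertex_of_mem hvS]
    exact (commute_of_adj (Γ := Γ.induce S) (G := fun v : S => G v) (u := ⟨u, huS⟩)
      (v := ⟨v, hvS⟩) huv a b).map inr
  · by_cases hvI : v ∈ I
    · rw [toSemidirectOfVertex_of_mem huS, toSemidirectOfVertex_of_notMem_of_mem hvS hvI]
      exact commute_inr_inl_of_mem_link hvI (of_mem_link ⟨u, huS⟩ huv a) b
    · rw [toSemidirectOfVertex_of_notMem_of_notMem hvS hvI]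
      exact Commute.one_right _
  · by_cases huI : u ∈ I
    · rw [toSemidirectOfVertex_of_mem hvS, toSemidirectOfVertex_of_notMem_of_mem huS huI]
      exact (commute_inr_inl_of_mem_link huI (of_mem_link ⟨v, hvS⟩ huv.symm b) a).symm
    · rw [toSemidirectOfVertex_of_notMem_of_notMem huS huI]
      exact Commute.one_left _
  · by_cases huI : u ∈ I
    · by_cases hvI : v ∈ I
      · exact absurd huv (hI u huI v hvI)
      · rw [toSemidirectOfVertex_of_notMem_of_notMem hvS hvI]
        exact Commute.one_right _
    · rw [toSemidirectOfVertex_of_notMem_of_notMem huS huI]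
      exact Commute.one_left _

variable (G S) in
noncomputable def toSemidirect (hI : ∀ u ∈ I, ∀ v ∈ I, ¬Γ.Adj u v) :
    GraphProduct Γ G →* LinkSemidirect Γ G S I :=
  lift (toSemidirectOfVertex Γ G S I) fun _ _ huv => commute_toSemidirectOfVertex hI huv

variable (hI : ∀ u ∈ I, ∀ v ∈ I, ¬Γ.Adj u v)

@[simp] theorem toSemidirect_of {v : V} (b : G v) :
    toSemidirect G S hI (of Γ G b) = toSemidirectOfVertex Γ G S I v b := rfl

theorem toSemidirect_inclusion (x : Induced Γ G S) :
    toSemidirect G S hI (inclusion S x) = inr x := by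
  suffices (toSemidirect G S hI).comp (inclusion S) = inr from DFunLike.congr_fun this x
  ext v b : 2
  simp [toSemidirectOfVertex_of_mem v.2]

theorem rightHom_comp_toSemidirect : rightHom.comp (toSemidirect G S hI) = restrict S := by
  ext v b
  by_cases hS : v ∈ S
  · simp [toSemidirectOfVertex_of_mem hS, restrict_of_mem hS]
  · by_cases hvI : v ∈ I
    · simp [toSemidirectOfVertex_of_notMem_of_mem hS hvI, restrict_of_notMem hS]
    · simp [toSemidirectOfVertex_of_notMem_of_notMem hS hvI, restrict_of_notMem hS]

theorem ofSemidirect_comp_toSemidirect :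
    (ofSemidirect Γ G S I).comp (toSemidirect G S hI) =
      (inclusion (S ∪ I)).comp (restrict (S ∪ I)) := by
  ext v b
  by_cases hS : v ∈ S
  · simp [toSemidirectOfVertex_of_mem hS, restrict_of_mem (Set.mem_union_left I hS),
      ofSemidirect]
  · by_cases hvI : v ∈ I
    · simp [toSemidirectOfVertex_of_notMem_of_mem hS hvI,
        restrict_of_mem (Set.mem_union_right S hvI), ofSemidirect, ofLinkCosetCoprod_of,
        conj_inclusion_of_eq (QuotientGroup.out_eq' _) b]
    · simp [toSemidirectOfVertex_of_notMem_of_notMem hS hvI,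
        restrict_of_notMem (by simp [hS, hvI] : v ∉ S ∪ I)]

theorem toSemidirect_comp_ofSemidirect (hSI : Disjoint S I) :
    (toSemidirect G S hI).comp (ofSemidirect Γ G S I) = MonoidHom.id _ := by
  refine SemidirectProduct.hom_ext ?_ ?_
  · refine CoprodI.ext_hom _ _ fun j => MonoidHom.ext fun b => ?_
    have hj : j.2.out • ((1 : Induced Γ G S) : Induced Γ G S ⧸ link Γ G S j.1) = j.2 := by
      rw [MulAction.Quotient.smul_coe, smul_eq_mul, mul_one, QuotientGroup.out_eq']
    have hv : (j.1 : V) ∉ S := Set.disjoint_right.1 hSI j.1.2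
    simp only [MonoidHom.comp_apply, MonoidHom.id_apply, ofSemidirect, SemidirectProduct.lift_inl,
      ofLinkCosetCoprod_of, MulAut.conj_apply, map_mul, map_inv, toSemidirect_of,
      toSemidirectOfVertex_of_notMem_of_mem hv j.1.2, toSemidirect_inclusion]
    rw [← map_inv, ← inl_aut, CoprodI.sigmaAction_of, hj]
  · refine MonoidHom.ext fun x => ?_
    simp [ofSemidirect, toSemidirect_inclusion]

theorem ker_toSemidirect (hSI : Disjoint S I) :
    (toSemidirect G S hI).ker = (restrict (Γ := Γ) (G := G) (S ∪ I)).ker := by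
  have hinj : Function.Injective (ofSemidirect Γ G S I) :=
    Function.LeftInverse.injective (DFunLike.congr_fun (toSemidirect_comp_ofSemidirect hI hSI))
  rw [← MonoidHom.ker_comp_of_injective _ _ hinj, ofSemidirect_comp_toSemidirect,
    MonoidHom.ker_comp_of_injective _ _ inclusion_injective]

end Splitting

theorem exists_surjective_ker_eq_ker_restrict_union {S I : Set V}
    (hI : ∀ u ∈ I, ∀ v ∈ I, ¬Γ.Adj u v) (hSI : Disjoint S I) :
    ∃ φ : (restrict (Γ := Γ) (G := G) S).ker →* LinkCosetCoprod Γ G S I,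
      Function.Surjective φ ∧ φ.ker = (restrict (S ∪ I)).ker.subgroupOf (restrict S).ker := by
  have hsurj : Function.Surjective (toSemidirect G S hI) :=
    Function.RightInverse.surjective (DFunLike.congr_fun (toSemidirect_comp_ofSemidirect hI hSI))
  rw [← rightHom_comp_toSemidirect hI, ← ker_toSemidirect hI hSI]
  exact ⟨_, leftOnKer_surjective hsurj, ker_leftOnKer _⟩

end GraphProduct

open GraphProduct in
/-- A graph product over a graph with chromatic number `m` has a subnormal series of
length `m` in which every factor is a free product of copies of vertex groups.
(The factor `G_{i-1}/G_i` being isomorphic to a free product is expressed via a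
surjective homomorphism from `G_{i-1}` with kernel `G_i`.) -/
theorem stmt11 {V : Type u} (Γ : SimpleGraph V) (G : V → Type u) [∀ v, Group (G v)]
    (m : ℕ) (hchr : Γ.chromaticNumber = (m : ℕ∞)) :
    ∃ s : Fin (m + 1) → Subgroup (GraphProduct Γ G),
      s 0 = ⊤ ∧ s (Fin.last m) = ⊥ ∧
      (∀ i : Fin m, s i.succ ≤ s i.castSucc) ∧
      (∀ i : Fin m, ((s i.succ).subgroupOf (s i.castSucc)).Normal) ∧
      ∀ i : Fin m, ∃ (ι : Type u) (f : ι → V)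
        (φ : ↥(s i.castSucc) →* Monoid.CoprodI fun j : ι => G (f j)),
        Function.Surjective φ ∧ φ.ker = (s i.succ).subgroupOf (s i.castSucc) := by
  obtain ⟨C⟩ : Γ.Colorable m := SimpleGraph.chromaticNumber_le_iff_colorable.mp hchr.le
  let S (k : ℕ) : Set V := {v | (C v : ℕ) < k}
  let I (k : ℕ) : Set V := {v | (C v : ℕ) = k}
  have hS_union (k : ℕ) : S k ∪ I k = S (k + 1) := by
    ext v
    simp only [S, I, Set.mem_union, Set.mem_ofPred_eq]
    omega
  have step (i : ℕ) :
      ∃ φ : (restrict (Γ := Γ) (G := G) (S i)).ker →* LinkCosetCoprod Γ G (S i) (I i),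
        Function.Surjective φ ∧
          φ.ker = (restrict (S (i + 1))).ker.subgroupOf (restrict (S i)).ker := by
    rw [← hS_union]
    refine exists_surjective_ker_eq_ker_restrict_union ?_ ?_
    · exact fun u hu v hv huv => C.valid huv (Fin.val_injective (hu.trans hv.symm))
    · exact Set.disjoint_left.2 fun v hv hv' => (ne_of_lt hv) hv'
  refine ⟨fun i => (restrict (S i)).ker, ker_restrict_eq_top fun v => Nat.not_lt_zero _,
    ker_restrict_eq_bot fun v => (C v).isLt,
    fun i => ker_restrict_anti fun v (hv : (C v : ℕ) < i) => Nat.lt_succ_of_lt hv,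
    fun i => ?_, fun i => ?_⟩
  · obtain ⟨φ, -, hker⟩ := step i
    exact hker ▸ φ.normal_ker
  · obtain ⟨φ, hsurj, hker⟩ := step i
    exact ⟨LinkCoset Γ G (S i) (I i), fun j => j.1, φ, hsurj, hker⟩
end

section
/- For a graph product G = 𝒢(Γ; G_v) with generating set X = ⋃_v X_v, any non-geodesic word w over X representing an element g can be transformed into a strictly shorter word representing g by a sequence of shuffles followed by replacing a subword over some X_v by a shorter word over X_v equal to it in G_v. -/
variable {V : Type*}

open scoped commutatorElement

/-- Evaluation of a list of syllables in the graph product. -/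
def exprProd (Γ : SimpleGraph V) (G : V → Type*) [∀ v, Group (G v)]
    (w : List (Σ v, G v)) : GraphProduct Γ G :=
  (w.map fun s => GraphProduct.of Γ G s.2).prod

/-- An expression is reduced if it has minimal length among all expressions
for the same element. -/
def IsReducedExpr (Γ : SimpleGraph V) (G : V → Type*) [∀ v, Group (G v)]
    (w : List (Σ v, G v)) : Prop :=
  ∀ w' : List (Σ v, G v), exprProd Γ G w' = exprProd Γ G w → w.length ≤ w'.length

/-- A word over the union of the generating sets `X v`. -/
def IsXWord {G : V → Type*} (X : ∀ v, Set (G v)) (w : List (Σ v, G v)) : Prop :=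
  ∀ s ∈ w, s.2 ∈ X s.1

/-- A geodesic word over `X`: an `X`-word of minimal length among `X`-words
representing the same element. -/
def IsGeodesicWord (Γ : SimpleGraph V) (G : V → Type*) [∀ v, Group (G v)]
    (X : ∀ v, Set (G v)) (w : List (Σ v, G v)) : Prop :=
  IsXWord X w ∧ ∀ w' : List (Σ v, G v), IsXWord X w' →
    exprProd Γ G w' = exprProd Γ G w → w.length ≤ w'.length

/-- A shuffle swaps two adjacent letters lying in vertex groups of adjacent vertices. -/
def ShuffleStep (Γ : SimpleGraph V) (G : V → Type*) [∀ v, Group (G v)]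
    (w w' : List (Σ v, G v)) : Prop :=
  ∃ (p q : List (Σ v, G v)) (s t : Σ v, G v), Γ.Adj s.1 t.1 ∧
    w = p ++ s :: t :: q ∧ w' = p ++ t :: s :: q

/-- Word metric on the graph product with respect to `X`. -/
noncomputable def wordDist (Γ : SimpleGraph V) (G : V → Type*) [∀ v, Group (G v)]
    (X : ∀ v, Set (G v)) (g h : GraphProduct Γ G) : ℕ :=
  sInf {k | ∃ w : List (Σ v, G v), IsXWord X w ∧ exprProd Γ G w = g⁻¹ * h ∧ w.length = k}

/-- Word length with respect to a generating set `S`. -/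
noncomputable def wordLength {G : Type*} [Group G] (S : Set G) (g : G) : ℕ :=
  sInf {k | ∃ w : List G, (∀ x ∈ w, x ∈ S) ∧ w.prod = g ∧ w.length = k}

/-- A group is word-hyperbolic if, with respect to some finite symmetric generating set,
the word metric satisfies Gromov's four-point condition. -/
def IsHyperbolicGroup (G : Type*) [Group G] : Prop :=
  ∃ S : Finset G, Subgroup.closure (S : Set G) = ⊤ ∧ (∀ x ∈ S, x⁻¹ ∈ (S : Set G)) ∧
    ∃ δ : ℝ, ∀ x y z w : G,
      (wordLength (S : Set G) (x⁻¹ * z) + wordLength (S : Set G) (y⁻¹ * w) : ℝ) ≤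
        max ((wordLength (S : Set G) (x⁻¹ * y) + wordLength (S : Set G) (z⁻¹ * w) : ℝ))
            ((wordLength (S : Set G) (x⁻¹ * w) + wordLength (S : Set G) (y⁻¹ * z) : ℝ)) + δ

/-!
Green's normal form theorem is proved by letting each vertex group act on shuffle classes of
reduced words: `a ∈ G v` is multiplied into the `v`-syllable that can be shuffled to the front,
or prepended if there is none. Projections onto pairs of equal or non-adjacent vertices determine
a word up to shuffles, which makes that front syllable unique; the actions of adjacent vertex groups
commute, so the graph product acts, and a reduced word is recovered from the element it
represents.

For the theorem, group the letters of `w` into blocks, each a word over one `X v`. Merging two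
blocks of the same vertex that can be shuffled together, and deleting empty blocks, change `w`
only by shuffles; a nonempty block with trivial product, or one that is not geodesic in `G v`,
is a shortening. If no shortening ever appears, we reach a reduced block word whose length is
the sum of the `X v`-lengths of its syllables, and by the normal form theorem no `X`-word for
the same element is shorter.
-/

theorem wordLength_le_length {H : Type*} [Group H] {S : Set H} {l : List H}
    (hl : ∀ x ∈ l, x ∈ S) : wordLength S l.prod ≤ l.length :=
  Nat.sInf_le ⟨l, hl, rfl, rfl⟩

theorem exists_length_eq_wordLength {H : Type*} [Group H] {S : Set H} {l : List H}
    (hl : ∀ x ∈ l, x ∈ S) :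
    ∃ c : List H, (∀ x ∈ c, x ∈ S) ∧ c.prod = l.prod ∧ c.length = wordLength S l.prod :=
  Nat.sInf_mem (s := {k | ∃ c : List H, (∀ x ∈ c, x ∈ S) ∧ c.prod = l.prod ∧ c.length = k})
    ⟨_, l, hl, rfl, rfl⟩

theorem List.exists_of_map_eq_append_cons_cons {α β : Type*} {f : α → β} {l : List α}
    {p q : List β} {x y : β} (h : l.map f = p ++ x :: y :: q) :
    ∃ P a b Q, l = P ++ a :: b :: Q ∧ P.map f = p ∧ f a = x ∧ f b = y ∧ Q.map f = q := by
  obtain ⟨P, l', rfl, hP, h'⟩ := List.map_eq_append_iff.1 h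
  obtain ⟨a, l'', rfl, ha, h''⟩ := List.map_eq_cons_iff.1 h'
  obtain ⟨b, Q, rfl, hb, hQ⟩ := List.map_eq_cons_iff.1 h''
  exact ⟨P, a, b, Q, rfl, hP, ha, hb, hQ⟩

namespace GraphProduct

open Relation

variable {Γ : SimpleGraph V} {G : V → Type*}

/-! ### Projections onto pairs of non-adjacent vertices -/

section Projection

open Classical

noncomputable def proj (p q : V) (w : List (Σ v, G v)) : List (Σ v, G v) :=
  w.filter fun s => s.1 = p ∨ s.1 = q

def ProjEquiv (Γ : SimpleGraph V) (w u : List (Σ v, G v)) : Prop :=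
  ∀ p q : V, (p = q ∨ ¬Γ.Adj p q) → proj p q w = proj p q u

variable {p q : V} {x : Σ v, G v} {w u : List (Σ v, G v)}

theorem proj_append : proj p q (w ++ u) = proj p q w ++ proj p q u := List.filter_append ..

theorem proj_cons_of_mem (h : x.1 = p ∨ x.1 = q) : proj p q (x :: w) = x :: proj p q w :=
  List.filter_cons_of_pos (decide_eq_true h)

theorem proj_cons_of_not_mem (h : ¬(x.1 = p ∨ x.1 = q)) : proj p q (x :: w) = proj p q w :=
  List.filter_cons_of_neg (by simpa using h)

theorem mem_proj : x ∈ proj p q w ↔ x ∈ w ∧ (x.1 = p ∨ x.1 = q) := by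
  simp [proj]

theorem proj_eq_nil_iff : proj p q w = [] ↔ ∀ x ∈ w, ¬(x.1 = p ∨ x.1 = q) := by
  simp [proj]

theorem not_adj_of_mem_pair {p q a b : V} (hpq : p = q ∨ ¬Γ.Adj p q) (ha : a = p ∨ a = q)
    (hb : b = p ∨ b = q) : ¬Γ.Adj a b := by
  rcases ha with rfl | rfl <;> rcases hb with rfl | rfl <;> rcases hpq with rfl | hpq <;>
    simp_all [SimpleGraph.adj_comm]

theorem ProjEquiv.exists_split {w t : List (Σ v, G v)} {y : Σ v, G v}
    (h : ProjEquiv Γ w (y :: t)) :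
    ∃ w₁ w₂, w = w₁ ++ y :: w₂ ∧ (∀ z ∈ w₁, Γ.Adj z.1 y.1) ∧ ProjEquiv Γ (w₁ ++ w₂) t := by
  have h₀ : proj y.1 y.1 w = y :: proj y.1 y.1 t := by
    rw [h y.1 y.1 (.inl rfl), proj_cons_of_mem (.inl rfl)]
  obtain ⟨w₁, w₂, rfl, hw₁, -, -⟩ := List.filter_eq_cons_iff.1 h₀
  have hadj : ∀ z ∈ w₁, Γ.Adj z.1 y.1 := by
    intro z hz
    by_contra hzy
    have hproj := h z.1 y.1 (.inr hzy)
    rw [proj_append, proj_cons_of_mem (.inr rfl), proj_cons_of_mem (.inr rfl)] at hproj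
    obtain ⟨z', r, hz'⟩ := List.exists_cons_of_ne_nil
      (List.ne_nil_of_mem (mem_proj.2 ⟨hz, .inl rfl⟩))
    rw [hz', List.cons_append, List.cons_eq_cons] at hproj
    exact hw₁ z' (mem_proj.1 (hz' ▸ List.mem_cons_self)).1 (by simp [hproj.1])
  refine ⟨w₁, w₂, rfl, hadj, fun p q hpq => ?_⟩
  have hproj := h p q hpq
  rw [proj_append] at hproj ⊢
  by_cases hy : y.1 = p ∨ y.1 = q
  · have hnil : proj p q w₁ = [] := proj_eq_nil_iff.2 fun z hz hzpq =>
      not_adj_of_mem_pair hpq hzpq hy (hadj z hz)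
    rw [proj_cons_of_mem hy, proj_cons_of_mem hy, hnil] at hproj
    simpa [hnil] using hproj
  · rwa [proj_cons_of_not_mem hy, proj_cons_of_not_mem hy] at hproj

end Projection

section Blocks

def flattenBlocks (W : List (Σ v, List (G v))) : List (Σ v, G v) :=
  W.flatMap fun b => b.2.map (Sigma.mk b.1)

@[simp]
theorem flattenBlocks_cons (b : Σ v, List (G v)) (W : List (Σ v, List (G v))) :
    flattenBlocks (b :: W) = b.2.map (Sigma.mk b.1) ++ flattenBlocks W := rfl

@[simp]
theorem flattenBlocks_append (W W' : List (Σ v, List (G v))) :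
    flattenBlocks (W ++ W') = flattenBlocks W ++ flattenBlocks W' :=
  List.flatMap_append

def singletonBlocks (w : List (Σ v, G v)) : List (Σ v, List (G v)) :=
  w.map fun s => ⟨s.1, [s.2]⟩

theorem flattenBlocks_singletonBlocks (w : List (Σ v, G v)) :
    flattenBlocks (singletonBlocks w) = w := by
  induction w with
  | nil => rfl
  | cons x t ih => simpa [singletonBlocks] using ih

theorem isXWord_flattenBlocks_iff {X : ∀ v, Set (G v)} {W : List (Σ v, List (G v))} :
    IsXWord X (flattenBlocks W) ↔ ∀ b ∈ W, ∀ a ∈ b.2, a ∈ X b.1 := by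
  simp only [IsXWord, flattenBlocks, List.mem_flatMap, List.mem_map]
  constructor
  · exact fun h b hb a ha => h _ ⟨b, hb, a, ha, rfl⟩
  · rintro h _ ⟨b, hb, a, ha, rfl⟩
    exact h b hb a ha

theorem length_flattenBlocks (W : List (Σ v, List (G v))) :
    (flattenBlocks W).length = (W.map fun b => b.2.length).sum := by
  induction W with
  | nil => rfl
  | cons b W ih => simp [ih]

end Blocks

variable [∀ v, Group (G v)]

theorem of_mul_of_comm {u v : V} (h : Γ.Adj u v) (a : G u) (b : G v) :
    of Γ G a * of Γ G b = of Γ G b * of Γ G a := by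
  have hmem : ⁅Monoid.CoprodI.of a, Monoid.CoprodI.of b⁆ ∈
      Subgroup.normalClosure (graphProductRels Γ G) :=
    Subgroup.subset_normalClosure ⟨u, v, h, a, b, rfl⟩
  have hone := (QuotientGroup.eq_one_iff _).2 hmem
  rw [← QuotientGroup.mk'_apply, map_commutatorElement] at hone
  exact commutatorElement_eq_one_iff_mul_comm.1 hone

@[simp]
theorem exprProd_cons (x : Σ v, G v) (w : List (Σ v, G v)) :
    exprProd Γ G (x :: w) = of Γ G x.2 * exprProd Γ G w := by
  simp [exprProd]

@[simp]
theorem exprProd_append (w u : List (Σ v, G v)) :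
    exprProd Γ G (w ++ u) = exprProd Γ G w * exprProd Γ G u := by
  simp [exprProd]

@[simp]
theorem exprProd_map_sigmaMk {v : V} (l : List (G v)) :
    exprProd Γ G (l.map (Sigma.mk v)) = of Γ G l.prod := by
  rw [(of Γ G).map_list_prod]
  simp [exprProd, Function.comp_def]

/-! ### Shuffle equivalence -/

def ShuffleEquiv (Γ : SimpleGraph V) (G : V → Type*) [∀ v, Group (G v)] :
    List (Σ v, G v) → List (Σ v, G v) → Prop :=
  ReflTransGen (ShuffleStep Γ G)

namespace ShuffleEquiv

variable {w u x : List (Σ v, G v)}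

@[refl]
theorem refl (w : List (Σ v, G v)) : ShuffleEquiv Γ G w w := ReflTransGen.refl

theorem trans (h : ShuffleEquiv Γ G w u) (h' : ShuffleEquiv Γ G u x) : ShuffleEquiv Γ G w x :=
  ReflTransGen.trans h h'

theorem single (h : ShuffleStep Γ G w u) : ShuffleEquiv Γ G w u := ReflTransGen.single h

theorem swap {s t : Σ v, G v} (h : Γ.Adj s.1 t.1) (w : List (Σ v, G v)) :
    ShuffleEquiv Γ G (s :: t :: w) (t :: s :: w) :=
  single ⟨[], w, s, t, h, rfl, rfl⟩

theorem symm (h : ShuffleEquiv Γ G w u) : ShuffleEquiv Γ G u w := by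
  induction h with
  | refl => rfl
  | tail _ hs ih =>
    obtain ⟨p, q, s, t, hst, h₁, h₂⟩ := hs
    exact (single ⟨p, q, t, s, hst.symm, h₂, h₁⟩).trans ih

theorem append_left (p : List (Σ v, G v)) (h : ShuffleEquiv Γ G w u) :
    ShuffleEquiv Γ G (p ++ w) (p ++ u) :=
  ReflTransGen.lift (p ++ ·) (fun _ _ ⟨a, b, s, t, hst, h₁, h₂⟩ =>
    ⟨p ++ a, b, s, t, hst, by simp [h₁], by simp [h₂]⟩) _ _ h

theorem append_right (q : List (Σ v, G v)) (h : ShuffleEquiv Γ G w u) :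
    ShuffleEquiv Γ G (w ++ q) (u ++ q) :=
  ReflTransGen.lift (· ++ q) (fun _ _ ⟨a, b, s, t, hst, h₁, h₂⟩ =>
    ⟨a, b ++ q, s, t, hst, by simp [h₁], by simp [h₂]⟩) _ _ h

theorem cons (x : Σ v, G v) (h : ShuffleEquiv Γ G w u) : ShuffleEquiv Γ G (x :: w) (x :: u) :=
  h.append_left [x]

theorem map_eq {β : Type*} (f : List (Σ v, G v) → β)
    (hf : ∀ ⦃w u⦄, ShuffleStep Γ G w u → f w = f u) (h : ShuffleEquiv Γ G w u) :
    f w = f u := by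
  induction h with
  | refl => rfl
  | tail _ hs ih => exact ih.trans (hf hs)

theorem perm (h : ShuffleEquiv Γ G w u) : w.Perm u := by
  induction h with
  | refl => rfl
  | tail _ hs ih =>
    obtain ⟨p, q, s, t, -, rfl, rfl⟩ := hs
    exact ih.trans ((List.Perm.swap t s q).append_left p)

theorem exprProd_eq (h : ShuffleEquiv Γ G w u) : exprProd Γ G w = exprProd Γ G u :=
  h.map_eq _ fun _ _ ⟨p, q, s, t, hst, h₁, h₂⟩ => by
    subst h₁ h₂
    simp only [exprProd_append, exprProd_cons, ← mul_assoc, of_mul_of_comm hst]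

end ShuffleEquiv

theorem shuffleEquiv_append_cons {l : List (Σ v, G v)} {y : Σ v, G v}
    (h : ∀ z ∈ l, Γ.Adj z.1 y.1) (m : List (Σ v, G v)) :
    ShuffleEquiv Γ G (l ++ y :: m) (y :: (l ++ m)) := by
  induction l with
  | nil => rfl
  | cons z l ih =>
    exact ((ih fun z hz => h z (List.mem_cons_of_mem _ hz)).cons z).trans
      (ShuffleEquiv.swap (h z List.mem_cons_self) _)

theorem shuffleEquiv_append_comm {l m : List (Σ v, G v)}
    (h : ∀ a ∈ l, ∀ b ∈ m, Γ.Adj a.1 b.1) : ShuffleEquiv Γ G (l ++ m) (m ++ l) := by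
  induction m with
  | nil => simp only [List.append_nil, List.nil_append]; rfl
  | cons b m ih =>
    exact (shuffleEquiv_append_cons (fun a ha => h a ha b List.mem_cons_self) m).trans
      ((ih fun a ha c hc => h a ha c (List.mem_cons_of_mem _ hc)).cons b)

theorem ShuffleEquiv.projEquiv {w u : List (Σ v, G v)} (h : ShuffleEquiv Γ G w u) :
    ProjEquiv Γ w u := fun p q hpq =>
  h.map_eq (proj p q) fun _ _ ⟨a, b, s, t, hst, h₁, h₂⟩ => by
    subst h₁ h₂
    rw [proj_append, proj_append]
    by_cases hs : s.1 = p ∨ s.1 = q <;> by_cases ht : t.1 = p ∨ t.1 = q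
    · exact absurd hst (not_adj_of_mem_pair hpq hs ht)
    all_goals simp [proj_cons_of_mem, proj_cons_of_not_mem, hs, ht]

theorem ProjEquiv.shuffleEquiv {w u : List (Σ v, G v)} (h : ProjEquiv Γ w u) :
    ShuffleEquiv Γ G w u := by
  induction w generalizing u with
  | nil =>
    cases u with
    | nil => rfl
    | cons y t =>
      obtain ⟨w₁, w₂, hw, -⟩ := ProjEquiv.exists_split h
      simp at hw
  | cons x t ih =>
    obtain ⟨u₁, u₂, rfl, hadj, hrest⟩ := ProjEquiv.exists_split fun p q hpq => (h p q hpq).symm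
    exact ((ih fun p q hpq => (hrest p q hpq).symm).cons x).trans
      (shuffleEquiv_append_cons hadj u₂).symm

theorem ShuffleEquiv.cons_of_fst_eq {x y : Σ v, G v} {t t' : List (Σ v, G v)}
    (h : ShuffleEquiv Γ G (x :: t) (y :: t')) (hxy : x.1 = y.1) :
    x = y ∧ ShuffleEquiv Γ G t t' := by
  obtain ⟨w₁, w₂, hsplit, hadj, hrest⟩ := h.projEquiv.exists_split
  cases w₁ with
  | nil =>
    obtain ⟨rfl, rfl⟩ := List.cons_eq_cons.1 hsplit
    exact ⟨rfl, hrest.shuffleEquiv⟩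
  | cons z w₁ =>
    obtain ⟨rfl, -⟩ := List.cons_eq_cons.1 hsplit
    exact absurd (hxy ▸ hadj x List.mem_cons_self) (Γ.loopless.irrefl _)

/-! ### Reduced words -/

def HasFront (Γ : SimpleGraph V) (G : V → Type*) [∀ v, Group (G v)] (v : V)
    (w : List (Σ v, G v)) : Prop :=
  ∃ p : G v × List (Σ v, G v), ShuffleEquiv Γ G w (⟨v, p.1⟩ :: p.2)

theorem ShuffleEquiv.hasFront_iff {v : V} {w u : List (Σ v, G v)} (h : ShuffleEquiv Γ G w u) :
    HasFront Γ G v w ↔ HasFront Γ G v u :=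
  ⟨fun ⟨p, hp⟩ => ⟨p, h.symm.trans hp⟩, fun ⟨p, hp⟩ => ⟨p, h.trans hp⟩⟩

theorem hasFront_cons_iff {v : V} {x : Σ v, G v} {w : List (Σ v, G v)} (hx : x.1 ≠ v) :
    HasFront Γ G v (x :: w) ↔ Γ.Adj x.1 v ∧ HasFront Γ G v w := by
  constructor
  · rintro ⟨⟨b, t⟩, h⟩
    obtain ⟨w₁, w₂, hsplit, hadj, -⟩ := h.projEquiv.exists_split
    cases w₁ with
    | nil => exact absurd (congrArg Sigma.fst (List.cons_eq_cons.1 hsplit).1) hx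
    | cons z w₁ =>
      obtain ⟨rfl, rfl⟩ := List.cons_eq_cons.1 hsplit
      exact ⟨hadj x List.mem_cons_self,
        ⟨b, w₁ ++ w₂⟩, shuffleEquiv_append_cons (fun z hz => hadj z (List.mem_cons_of_mem _ hz)) w₂⟩
  · rintro ⟨hadj, ⟨b, t⟩, h⟩
    exact ⟨⟨b, x :: t⟩, (h.cons x).trans (ShuffleEquiv.swap hadj t)⟩

def IsReduced (Γ : SimpleGraph V) (G : V → Type*) [∀ v, Group (G v)] :
    List (Σ v, G v) → Prop
  | [] => True
  | x :: t => x.2 ≠ 1 ∧ ¬HasFront Γ G x.1 t ∧ IsReduced Γ G t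

theorem IsReduced.of_shuffleStep {w u : List (Σ v, G v)} (h : ShuffleStep Γ G w u)
    (hw : IsReduced Γ G w) : IsReduced Γ G u := by
  obtain ⟨p, q, s, t, hst, rfl, rfl⟩ := h
  induction p with
  | nil =>
    obtain ⟨hs, hst', ht, htq, hq⟩ := hw
    refine ⟨ht, ?_, hs, fun hsq => hst' ((hasFront_cons_iff hst.ne').2 ⟨hst.symm, hsq⟩), hq⟩
    rw [hasFront_cons_iff hst.ne]
    exact fun h => htq h.2
  | cons x p ih =>
    obtain ⟨hx, hxf, hrest⟩ := hw
    exact ⟨hx, ((ShuffleEquiv.swap hst q).append_left p).hasFront_iff.not.1 hxf, ih hrest⟩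

theorem IsReduced.of_shuffleEquiv {w u : List (Σ v, G v)} (h : ShuffleEquiv Γ G w u)
    (hw : IsReduced Γ G w) : IsReduced Γ G u := by
  induction h with
  | refl => exact hw
  | tail _ hs ih => exact ih.of_shuffleStep hs

theorem exists_of_not_isReduced {w : List (Σ v, G v)} (hw : ¬IsReduced Γ G w) :
    (∃ s ∈ w, s.2 = 1) ∨
      ∃ p x y q, x.1 = y.1 ∧ ShuffleEquiv Γ G w (p ++ x :: y :: q) := by
  induction w with
  | nil => exact absurd trivial hw
  | cons x t ih =>
    by_cases hx : x.2 = 1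
    · exact .inl ⟨x, List.mem_cons_self, hx⟩
    by_cases hf : HasFront Γ G x.1 t
    · obtain ⟨⟨b, t'⟩, h⟩ := hf
      exact .inr ⟨[], x, ⟨x.1, b⟩, t', rfl, h.cons x⟩
    rcases ih fun ht => hw ⟨hx, hf, ht⟩ with ⟨s, hs, hs1⟩ | ⟨p, y, z, q, hyz, h⟩
    · exact .inl ⟨s, List.mem_cons_of_mem _ hs, hs1⟩
    · exact .inr ⟨x :: p, y, z, q, hyz, h.cons x⟩

open Classical in
noncomputable def consSyllable (v : V) (c : G v) (t : List (Σ v, G v)) : List (Σ v, G v) :=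
  if c = 1 then t else ⟨v, c⟩ :: t

theorem ShuffleEquiv.consSyllable_congr {v : V} (c : G v) {t t' : List (Σ v, G v)}
    (h : ShuffleEquiv Γ G t t') :
    ShuffleEquiv Γ G (consSyllable v c t) (consSyllable v c t') := by
  unfold consSyllable
  split_ifs
  exacts [h, h.cons _]

theorem consSyllable_comm {u v : V} (huv : Γ.Adj u v) (c : G u) (d : G v)
    (t : List (Σ v, G v)) :
    ShuffleEquiv Γ G (consSyllable u c (consSyllable v d t))
      (consSyllable v d (consSyllable u c t)) := by
  unfold consSyllable
  split_ifs
  exacts [.refl _, .refl _, .refl _, ShuffleEquiv.swap huv t]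

theorem hasFront_consSyllable_iff {u v : V} (huv : Γ.Adj u v) (c : G u)
    {t : List (Σ v, G v)} : HasFront Γ G v (consSyllable u c t) ↔ HasFront Γ G v t := by
  unfold consSyllable
  split_ifs
  exacts [Iff.rfl, (hasFront_cons_iff huv.ne).trans (and_iff_right huv)]

theorem isReduced_consSyllable {v : V} (c : G v) {t : List (Σ v, G v)}
    (ht : IsReduced Γ G t) (hnt : ¬HasFront Γ G v t) :
    IsReduced Γ G (consSyllable v c t) := by
  unfold consSyllable
  split_ifs with hc
  exacts [ht, ⟨hc, hnt, ht⟩]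

theorem IsReduced.exists_consSyllable {w : List (Σ v, G v)} (hw : IsReduced Γ G w) (v : V) :
    ∃ c t, ShuffleEquiv Γ G w (consSyllable v c t) ∧ IsReduced Γ G t ∧ ¬HasFront Γ G v t := by
  by_cases h : HasFront Γ G v w
  · obtain ⟨⟨b, t⟩, hwt⟩ := h
    obtain ⟨hb, hnt, ht⟩ := hw.of_shuffleEquiv hwt
    exact ⟨b, t, by rwa [consSyllable, if_neg hb], ht, hnt⟩
  · exact ⟨1, w, by rw [consSyllable, if_pos rfl], hw, h⟩

/-! ### The normal form theorem -/

noncomputable def actList (Γ : SimpleGraph V) {v : V} (a : G v) (w : List (Σ v, G v)) :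
    List (Σ v, G v) :=
  open Classical in
  if h : HasFront Γ G v w then consSyllable v (a * h.choose.1) h.choose.2
  else consSyllable v a w

theorem actList_of_shuffleEquiv_cons {v : V} (a : G v) {w t : List (Σ v, G v)} {b : G v}
    (h : ShuffleEquiv Γ G w (⟨v, b⟩ :: t)) :
    ShuffleEquiv Γ G (actList Γ a w) (consSyllable v (a * b) t) := by
  have hf : HasFront Γ G v w := ⟨(b, t), h⟩
  obtain ⟨hb, ht⟩ := (h.symm.trans hf.choose_spec).cons_of_fst_eq rfl
  rw [actList, dif_pos hf, ← eq_of_heq (Sigma.mk.inj_iff.1 hb).2]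
  exact ht.symm.consSyllable_congr _

theorem ShuffleEquiv.actList {v : V} (a : G v) {w w' : List (Σ v, G v)}
    (h : ShuffleEquiv Γ G w w') :
    ShuffleEquiv Γ G (GraphProduct.actList Γ a w) (GraphProduct.actList Γ a w') := by
  by_cases hf : HasFront Γ G v w
  · obtain ⟨⟨b, t⟩, hwt⟩ := hf
    exact (actList_of_shuffleEquiv_cons a hwt).trans
      (actList_of_shuffleEquiv_cons a (h.symm.trans hwt)).symm
  · rw [GraphProduct.actList, dif_neg hf, GraphProduct.actList, dif_neg (h.hasFront_iff.not.1 hf)]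
    exact h.consSyllable_congr a

theorem actList_of_shuffleEquiv_consSyllable {v : V} (a : G v) {w t : List (Σ v, G v)}
    {c : G v} (hwt : ShuffleEquiv Γ G w (consSyllable v c t)) (hnt : ¬HasFront Γ G v t) :
    ShuffleEquiv Γ G (actList Γ a w) (consSyllable v (a * c) t) := by
  refine (hwt.actList a).trans ?_
  by_cases hc : c = 1
  · rw [hc, mul_one, consSyllable, if_pos rfl, actList, dif_neg hnt]
  · rw [consSyllable, if_neg hc]
    exact actList_of_shuffleEquiv_cons a (.refl _)

theorem IsReduced.actList {v : V} (a : G v) {w : List (Σ v, G v)} (hw : IsReduced Γ G w) :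
    IsReduced Γ G (GraphProduct.actList Γ a w) := by
  obtain ⟨c, t, hwt, ht, hnt⟩ := hw.exists_consSyllable v
  exact (isReduced_consSyllable (a * c) ht hnt).of_shuffleEquiv
    (actList_of_shuffleEquiv_consSyllable a hwt hnt).symm

theorem actList_one {v : V} {w : List (Σ v, G v)} (hw : IsReduced Γ G w) :
    ShuffleEquiv Γ G (actList Γ (1 : G v) w) w := by
  obtain ⟨c, t, hwt, -, hnt⟩ := hw.exists_consSyllable v
  have h := actList_of_shuffleEquiv_consSyllable 1 hwt hnt
  rw [one_mul] at h
  exact h.trans hwt.symm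

theorem actList_actList {v : V} (a b : G v) {w : List (Σ v, G v)} (hw : IsReduced Γ G w) :
    ShuffleEquiv Γ G (actList Γ a (actList Γ b w)) (actList Γ (a * b) w) := by
  obtain ⟨c, t, hwt, -, hnt⟩ := hw.exists_consSyllable v
  have hab := actList_of_shuffleEquiv_consSyllable (a * b) hwt hnt
  rw [mul_assoc] at hab
  exact (actList_of_shuffleEquiv_consSyllable a
    (actList_of_shuffleEquiv_consSyllable b hwt hnt) hnt).trans hab.symm

/-- Actions of adjacent vertex groups commute: decompose `w` as `⟨u, c⟩ ⟨v, d⟩ e` where neither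
`u` nor `v` can be shuffled to the front of `e`; then `a` acts on `c` and `b` on `d`. -/
theorem actList_comm {u v : V} (huv : Γ.Adj u v) (a : G u) (b : G v) {w : List (Σ v, G v)}
    (hw : IsReduced Γ G w) :
    ShuffleEquiv Γ G (actList Γ a (actList Γ b w)) (actList Γ b (actList Γ a w)) := by
  obtain ⟨c, t, hwt, ht, hnut⟩ := hw.exists_consSyllable u
  obtain ⟨d, e, hte, -, hnve⟩ := ht.exists_consSyllable v
  have hnue : ¬HasFront Γ G u e := fun h =>
    hnut (hte.hasFront_iff.2 ((hasFront_consSyllable_iff huv.symm d).2 h))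
  have hw' : ShuffleEquiv Γ G w (consSyllable u c (consSyllable v d e)) :=
    hwt.trans (hte.consSyllable_congr c)
  have hu : ∀ (a : G u) {x c d}, ShuffleEquiv Γ G x (consSyllable u c (consSyllable v d e)) →
      ShuffleEquiv Γ G (actList Γ a x) (consSyllable u (a * c) (consSyllable v d e)) :=
    fun a _ _ d h => actList_of_shuffleEquiv_consSyllable a h
      ((hasFront_consSyllable_iff huv.symm d).not.2 hnue)
  have hv : ∀ (b : G v) {x c d}, ShuffleEquiv Γ G x (consSyllable u c (consSyllable v d e)) →
      ShuffleEquiv Γ G (actList Γ b x) (consSyllable u c (consSyllable v (b * d) e)) :=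
    fun b _ c _ h => (actList_of_shuffleEquiv_consSyllable b (h.trans (consSyllable_comm huv _ _ e))
      ((hasFront_consSyllable_iff huv c).not.2 hnve)).trans (consSyllable_comm huv _ _ e).symm
  exact (hu a (hv b hw')).trans (hv b (hu a hw')).symm

variable (Γ G) in
def shuffleSetoid : Setoid (List (Σ v, G v)) :=
  ⟨ShuffleEquiv Γ G, ⟨.refl, .symm, .trans⟩⟩

variable (Γ G) in
def NormalForm : Type _ :=
  Quotient ((shuffleSetoid Γ G).comap (Subtype.val : {w // IsReduced Γ G w} → _))

namespace NormalForm

def mk (w : List (Σ v, G v)) (hw : IsReduced Γ G w) : NormalForm Γ G := Quotient.mk _ ⟨w, hw⟩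

noncomputable def act {v : V} (a : G v) : NormalForm Γ G → NormalForm Γ G :=
  Quotient.map (fun w => ⟨actList Γ a w.1, w.2.actList a⟩) fun _ _ h => h.actList a

theorem act_mk {v : V} (a : G v) {w : List (Σ v, G v)} (hw : IsReduced Γ G w) :
    act a (mk w hw) = mk (actList Γ a w) (hw.actList a) := rfl

variable (Γ G) in
noncomputable def vertexPerm (v : V) : G v →* Equiv.Perm (NormalForm Γ G) :=
  letI : MulAction (G v) (NormalForm Γ G) :=
    { smul := act
      one_smul := fun x => Quotient.inductionOn x fun w => Quotient.sound (actList_one w.2)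
      mul_smul := fun a b x =>
        Quotient.inductionOn x fun w => Quotient.sound (actList_actList a b w.2).symm }
  MulAction.toPermHom (G v) (NormalForm Γ G)

theorem vertexPerm_apply {v : V} (a : G v) (x : NormalForm Γ G) :
    vertexPerm Γ G v a x = act a x := rfl

theorem act_comm {u v : V} (huv : Γ.Adj u v) (a : G u) (b : G v) (x : NormalForm Γ G) :
    act a (act b x) = act b (act a x) :=
  Quotient.inductionOn x fun w => Quotient.sound (actList_comm huv a b w.2)

end NormalForm

open NormalForm

variable (Γ G) in
noncomputable def toPerm : GraphProduct Γ G →* Equiv.Perm (NormalForm Γ G) :=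
  QuotientGroup.lift _ (Monoid.CoprodI.lift (vertexPerm Γ G)) <| by
    refine Subgroup.normalClosure_le_normal ?_
    rintro _ ⟨u, v, huv, a, b, rfl⟩
    rw [SetLike.mem_coe, MonoidHom.mem_ker, map_commutatorElement, Monoid.CoprodI.lift_of,
      Monoid.CoprodI.lift_of, commutatorElement_eq_one_iff_mul_comm]
    exact Equiv.ext fun x => act_comm huv a b x

theorem toPerm_of {v : V} (a : G v) : toPerm Γ G (of Γ G a) = vertexPerm Γ G v a :=
  Monoid.CoprodI.lift_of _ _

theorem toPerm_exprProd {w : List (Σ v, G v)} (hw : IsReduced Γ G w) :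
    toPerm Γ G (exprProd Γ G w) (mk [] trivial) = mk w hw := by
  induction w with
  | nil => rfl
  | cons x t ih =>
    obtain ⟨hx, hnt, ht⟩ := hw
    rw [exprProd_cons, map_mul, Equiv.Perm.mul_apply, ih ht, toPerm_of, vertexPerm_apply,
      act_mk]
    refine Quotient.sound ?_
    change ShuffleEquiv Γ G (actList Γ x.2 t) (x :: t)
    rw [actList, dif_neg hnt, consSyllable, if_neg hx]

/-- Green's normal form theorem. -/
theorem IsReduced.shuffleEquiv_of_exprProd_eq {w u : List (Σ v, G v)} (hw : IsReduced Γ G w)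
    (hu : IsReduced Γ G u) (h : exprProd Γ G w = exprProd Γ G u) : ShuffleEquiv Γ G w u :=
  Quotient.exact <| show mk w hw = mk u hu by
    rw [← toPerm_exprProd hw, ← toPerm_exprProd hu, h]

/-! ### Shortening words -/

def IsShortenable (Γ : SimpleGraph V) (G : V → Type*) [∀ v, Group (G v)]
    (X : ∀ v, Set (G v)) (w : List (Σ v, G v)) : Prop :=
  ∃ (p q : List (Σ v, G v)) (v : V) (mv mv' : List (G v)),
    ShuffleEquiv Γ G w (p ++ mv.map (Sigma.mk v) ++ q) ∧
      (∀ a ∈ mv', a ∈ X v) ∧ mv'.prod = mv.prod ∧ mv'.length < mv.length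

variable {X : ∀ v, Set (G v)}

theorem IsShortenable.of_shuffleEquiv {w u : List (Σ v, G v)} (h : ShuffleEquiv Γ G w u)
    (hu : IsShortenable Γ G X u) : IsShortenable Γ G X w :=
  let ⟨p, q, v, mv, mv', hsh, hX, hprod, hlt⟩ := hu
  ⟨p, q, v, mv, mv', h.trans hsh, hX, hprod, hlt⟩

def blockSyllables (W : List (Σ v, List (G v))) : List (Σ v, G v) :=
  W.map fun b => ⟨b.1, b.2.prod⟩

theorem exprProd_flattenBlocks (W : List (Σ v, List (G v))) :
    exprProd Γ G (flattenBlocks W) = exprProd Γ G (blockSyllables W) := by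
  induction W with
  | nil => rfl
  | cons b W ih => simp [ih, blockSyllables]

theorem ShuffleEquiv.exists_blocks {W : List (Σ v, List (G v))} {u : List (Σ v, G v)}
    (h : ShuffleEquiv Γ G (blockSyllables W) u) :
    ∃ W', W.Perm W' ∧ ShuffleEquiv Γ G (flattenBlocks W) (flattenBlocks W') ∧
      blockSyllables W' = u := by
  induction h with
  | refl => exact ⟨W, .refl _, .refl _, rfl⟩
  | tail _ hstep ih =>
    obtain ⟨W', hperm, hflat, hsyl⟩ := ih
    obtain ⟨p, q, s, t, hst, rfl, rfl⟩ := hstep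
    obtain ⟨P, b, c, Q, rfl, rfl, rfl, rfl, rfl⟩ := List.exists_of_map_eq_append_cons_cons hsyl
    refine ⟨P ++ c :: b :: Q, hperm.trans ((List.Perm.swap c b Q).append_left P),
      hflat.trans ?_, by simp [blockSyllables]⟩
    have hbc := shuffleEquiv_append_comm (Γ := Γ) (l := b.2.map (Sigma.mk b.1))
      (m := c.2.map (Sigma.mk c.1)) fun _ ha _ hb => by
        obtain ⟨_, -, rfl⟩ := List.mem_map.1 ha
        obtain ⟨_, -, rfl⟩ := List.mem_map.1 hb
        exact hst
    simpa using (hbc.append_right (flattenBlocks Q)).append_left (flattenBlocks P)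

variable (Γ G X) in
structure IsBlockReduction (w : List (Σ v, G v)) (W : List (Σ v, List (G v))) : Prop where
  subset : flattenBlocks W ⊆ w
  exprProd_eq : exprProd Γ G (flattenBlocks W) = exprProd Γ G w
  length_le : (flattenBlocks W).length ≤ w.length
  isShortenable_or_shuffleEquiv :
    IsShortenable Γ G X w ∨ ShuffleEquiv Γ G w (flattenBlocks W)

namespace IsBlockReduction

variable {w : List (Σ v, G v)} {W₁ W₂ : List (Σ v, List (G v))}

theorem of_shuffleEquiv (h : ShuffleEquiv Γ G w (flattenBlocks W₁)) :
    IsBlockReduction Γ G X w W₁ :=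
  ⟨h.perm.symm.subset, h.exprProd_eq.symm, h.perm.length_eq.symm.le, .inr h⟩

theorem trans (h₁ : IsBlockReduction Γ G X w W₁)
    (h₂ : IsBlockReduction Γ G X (flattenBlocks W₁) W₂) : IsBlockReduction Γ G X w W₂ where
  subset := List.Subset.trans h₂.subset h₁.subset
  exprProd_eq := h₂.exprProd_eq.trans h₁.exprProd_eq
  length_le := h₂.length_le.trans h₁.length_le
  isShortenable_or_shuffleEquiv := h₁.isShortenable_or_shuffleEquiv.elim .inl fun hsh =>
    h₂.isShortenable_or_shuffleEquiv.imp (·.of_shuffleEquiv hsh) hsh.trans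

theorem isXWord (h : IsBlockReduction Γ G X w W₁) (hw : IsXWord X w) :
    ∀ b ∈ W₁, ∀ a ∈ b.2, a ∈ X b.1 :=
  isXWord_flattenBlocks_iff.1 fun s hs => hw s (h.subset hs)

end IsBlockReduction

/-- Deleting a block with trivial product either deletes nothing or is itself a shortening. -/
theorem isBlockReduction_append_cons {b : Σ v, List (G v)} (hb : b.2.prod = 1)
    (P Q : List (Σ v, List (G v))) :
    IsBlockReduction Γ G X (flattenBlocks (P ++ b :: Q)) (P ++ Q) := by
  obtain ⟨v, l⟩ := b
  refine ⟨by simp [List.subset_def]; tauto, by simp [hb], by simp, ?_⟩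
  cases l with
  | nil => exact .inr (by simpa using .refl _)
  | cons a l =>
    exact .inl ⟨flattenBlocks P, flattenBlocks Q, v, a :: l, [], by simpa using .refl _,
      by simp, hb.symm, by simp⟩

theorem exists_isBlockReduction_of_not_isReduced {W : List (Σ v, List (G v))}
    (hW : ¬IsReduced Γ G (blockSyllables W)) :
    ∃ W', W'.length < W.length ∧ IsBlockReduction Γ G X (flattenBlocks W) W' := by
  rcases exists_of_not_isReduced hW with ⟨s, hs, hs1⟩ | ⟨p, x, y, q, hxy, hsh⟩
  · obtain ⟨b, hb, rfl⟩ := List.mem_map.1 hs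
    obtain ⟨P, Q, rfl⟩ := List.append_of_mem hb
    exact ⟨P ++ Q, by simp, isBlockReduction_append_cons hs1 P Q⟩
  · obtain ⟨W₁, hperm, hflat, hsyl⟩ := hsh.exists_blocks
    obtain ⟨P, ⟨v, l⟩, ⟨v', m⟩, Q, rfl, -, rfl, rfl, -⟩ :=
      List.exists_of_map_eq_append_cons_cons hsyl
    obtain rfl : v = v' := hxy
    refine ⟨P ++ ⟨v, l ++ m⟩ :: Q, by simp [hperm.length_eq], .of_shuffleEquiv ?_⟩
    simpa using hflat

theorem exists_isReduced_isBlockReduction_flattenBlocks (W : List (Σ v, List (G v))) :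
    ∃ W', IsReduced Γ G (blockSyllables W') ∧ IsBlockReduction Γ G X (flattenBlocks W) W' := by
  induction hn : W.length using Nat.strong_induction_on generalizing W with
  | _ n ih =>
  by_cases hW : IsReduced Γ G (blockSyllables W)
  · exact ⟨W, hW, .of_shuffleEquiv (.refl _)⟩
  obtain ⟨W₁, hlt, h₁⟩ := exists_isBlockReduction_of_not_isReduced (X := X) hW
  obtain ⟨W₂, hred, h₂⟩ := ih _ (hn ▸ hlt) W₁ rfl
  exact ⟨W₂, hred, h₁.trans h₂⟩

theorem exists_isReduced_isBlockReduction (w : List (Σ v, G v)) :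
    ∃ W, IsReduced Γ G (blockSyllables W) ∧ IsBlockReduction Γ G X w W := by
  simpa only [flattenBlocks_singletonBlocks] using
    exists_isReduced_isBlockReduction_flattenBlocks (singletonBlocks w)

variable (X) in
noncomputable def sumWordLength (w : List (Σ v, G v)) : ℕ :=
  (w.map fun s => wordLength (X s.1) s.2).sum

theorem sumWordLength_blockSyllables (W : List (Σ v, List (G v))) :
    sumWordLength X (blockSyllables W) = (W.map fun b => wordLength (X b.1) b.2.prod).sum := by
  simp [sumWordLength, blockSyllables, Function.comp_def]

theorem ShuffleEquiv.sumWordLength_eq {w u : List (Σ v, G v)} (h : ShuffleEquiv Γ G w u) :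
    sumWordLength X w = sumWordLength X u :=
  (h.perm.map _).sum_eq

/-- Reduce `w` to a reduced block word; by the normal form theorem its syllables are a shuffle of
those of `r`. -/
theorem sumWordLength_le_length {r w : List (Σ v, G v)} (hr : IsReduced Γ G r)
    (hw : IsXWord X w) (h : exprProd Γ G w = exprProd Γ G r) : sumWordLength X r ≤ w.length := by
  obtain ⟨W, hred, hW⟩ := exists_isReduced_isBlockReduction (Γ := Γ) (X := X) w
  have hX := hW.isXWord hw
  have hsh : ShuffleEquiv Γ G (blockSyllables W) r := hred.shuffleEquiv_of_exprProd_eq hr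
    (by rw [← exprProd_flattenBlocks, hW.exprProd_eq, h])
  calc sumWordLength X r = sumWordLength X (blockSyllables W) := hsh.sumWordLength_eq.symm
    _ ≤ (flattenBlocks W).length := by
      rw [sumWordLength_blockSyllables, length_flattenBlocks]
      exact List.sum_le_sum fun b hb => wordLength_le_length (hX b hb)
    _ ≤ w.length := hW.length_le

theorem isGeodesicWord_of_not_isShortenable {w : List (Σ v, G v)} (hw : IsXWord X w)
    (h : ¬IsShortenable Γ G X w) : IsGeodesicWord Γ G X w := by
  refine ⟨hw, fun w' hw' hprod => ?_⟩
  obtain ⟨W, hred, hW⟩ := exists_isReduced_isBlockReduction (Γ := Γ) (X := X) w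
  have hsh := hW.isShortenable_or_shuffleEquiv.resolve_left h
  have hX := hW.isXWord hw
  have hgeod : ∀ b ∈ W, b.2.length ≤ wordLength (X b.1) b.2.prod := by
    intro b hb
    by_contra! hlt
    obtain ⟨c, hcX, hcprod, hclen⟩ := exists_length_eq_wordLength (hX b hb)
    obtain ⟨P, Q, rfl⟩ := List.append_of_mem hb
    exact h ⟨flattenBlocks P, flattenBlocks Q, b.1, b.2, c, by simpa using hsh, hcX, hcprod,
      hclen ▸ hlt⟩
  calc w.length = (flattenBlocks W).length := hsh.perm.length_eq
    _ ≤ sumWordLength X (blockSyllables W) := by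
      rw [sumWordLength_blockSyllables, length_flattenBlocks]
      exact List.sum_le_sum hgeod
    _ ≤ w'.length := sumWordLength_le_length hred hw'
      (by rw [hprod, ← exprProd_flattenBlocks, hsh.exprProd_eq])

end GraphProduct

theorem stmt18_general {V : Type*} (Γ : SimpleGraph V) (G : V → Type*) [∀ v, Group (G v)]
    (X : ∀ v, Set (G v))
    (w : List (Σ v, G v)) (hw : IsXWord X w)
    (hng : ∃ w' : List (Σ v, G v), IsXWord X w' ∧
      exprProd Γ G w' = exprProd Γ G w ∧ w'.length < w.length) :
    ∃ (w₁ p q : List (Σ v, G v)) (v : V) (mv mv' : List (G v)),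
      Relation.ReflTransGen (ShuffleStep Γ G) w w₁ ∧
      w₁ = p ++ mv.map (fun a => (⟨v, a⟩ : Σ v, G v)) ++ q ∧
      (∀ a ∈ mv', a ∈ X v) ∧ mv'.prod = mv.prod ∧ mv'.length < mv.length ∧
      exprProd Γ G (p ++ mv'.map (fun a => (⟨v, a⟩ : Σ v, G v)) ++ q) = exprProd Γ G w := by
  obtain ⟨w', hw', hprod, hlt⟩ := hng
  obtain ⟨p, q, v, mv, mv', hsh, hX, hmv, hlen⟩ : GraphProduct.IsShortenable Γ G X w := by
    by_contra hns
    exact ((GraphProduct.isGeodesicWord_of_not_isShortenable hw hns).2 w' hw' hprod).not_gt hlt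
  refine ⟨_, p, q, v, mv, mv', hsh, rfl, hX, hmv, hlen, ?_⟩
  rw [hsh.exprProd_eq]
  simp [hmv]

/-- A non-geodesic word over `X` can be shortened by a sequence of shuffles followed by
replacing a subword over some `X v` by a shorter word over `X v` equal to it in `G v`. -/
theorem stmt18 {V : Type*} (Γ : SimpleGraph V) (G : V → Type*) [∀ v, Group (G v)]
    (X : ∀ v, Set (G v))
    (hXgen : ∀ v, Subgroup.closure (X v) = ⊤)
    (w : List (Σ v, G v)) (hw : IsXWord X w)
    (hng : ∃ w' : List (Σ v, G v), IsXWord X w' ∧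
      exprProd Γ G w' = exprProd Γ G w ∧ w'.length < w.length) :
    ∃ (w₁ p q : List (Σ v, G v)) (v : V) (mv mv' : List (G v)),
      Relation.ReflTransGen (ShuffleStep Γ G) w w₁ ∧
      w₁ = p ++ mv.map (fun a => (⟨v, a⟩ : Σ v, G v)) ++ q ∧
      (∀ a ∈ mv', a ∈ X v) ∧ mv'.prod = mv.prod ∧ mv'.length < mv.length ∧
      exprProd Γ G (p ++ mv'.map (fun a => (⟨v, a⟩ : Σ v, G v)) ++ q) = exprProd Γ G w :=
  stmt18_general Γ G X w hw hng
end

section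
/- Let Γ be the cycle of length n ≥ 5 and let Y be the 2-complex whose vertices are the subsets S ⊆ ℤ/nℤ, with an edge between S and S ∪ {i} for each i ∉ S, and a square 2-cell on {S, S∪{i}, S∪{j}, S∪{i,j}} whenever i, j ∉ S and i, j are adjacent in the cycle. Then Y is a closed orientable surface with Euler characteristic (4−n)·2^{n−2}, hence of genus 1 + (n−4)·2^{n−3}. -/
/-- Vertices of the cube complex `Y`: subsets of `ZMod n`. -/
abbrev CubeVertex (n : ℕ) := Finset (ZMod n)

/-- Edges of `Y`: a pair `(S, k)` with `k ∉ S`, joining `S` and `insert k S`. -/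
def CubeEdge (n : ℕ) := {p : Finset (ZMod n) × ZMod n // p.2 ∉ p.1}

/-- Square faces of `Y`: a pair `(S, i)` with `i ∉ S` and `i+1 ∉ S`, representing the
square on `{S, S∪{i}, S∪{i+1}, S∪{i,i+1}}` in the two cyclically adjacent directions
`i` and `i+1`. -/
def CubeFace (n : ℕ) := {q : Finset (ZMod n) × ZMod n // q.2 ∉ q.1 ∧ q.2 + 1 ∉ q.1}


instance (n : ℕ) [NeZero n] : Fintype (CubeEdge n) := by
  unfold CubeEdge; infer_instance

instance (n : ℕ) [NeZero n] : Fintype (CubeFace n) := by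
  unfold CubeFace; infer_instance

/-- The (unoriented) edge `e` lies on the boundary of the square `f`. -/
def edgeInFace {n : ℕ} (e : CubeEdge n) (f : CubeFace n) : Prop :=
  e.1 = (f.1.1, f.1.2) ∨ e.1 = (f.1.1, f.1.2 + 1) ∨
    e.1 = (insert f.1.2 f.1.1, f.1.2 + 1) ∨ e.1 = (insert (f.1.2 + 1) f.1.1, f.1.2)

/-- `S` is a corner of the square `f`. -/
def isCorner {n : ℕ} (S : Finset (ZMod n)) (f : CubeFace n) : Prop :=
  S = f.1.1 ∨ S = insert f.1.2 f.1.1 ∨ S = insert (f.1.2 + 1) f.1.1 ∨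
    S = insert f.1.2 (insert (f.1.2 + 1) f.1.1)

/-- Two directions `k`, `k'` are adjacent in the link of the vertex `S` if some square
with corner `S` uses exactly the directions `k` and `k'`. -/
def linkAdj {n : ℕ} (S : Finset (ZMod n)) (k k' : ZMod n) : Prop :=
  ∃ f : CubeFace n, isCorner S f ∧
    ((k = f.1.2 ∧ k' = f.1.2 + 1) ∨ (k' = f.1.2 ∧ k = f.1.2 + 1))

/-- The oriented boundary of the square `f`, as a list of directed edges; `b` selects one
of the two orientations. -/
def orientedBoundary {n : ℕ} (f : CubeFace n) (b : Bool) :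
    List (Finset (ZMod n) × Finset (ZMod n)) :=
  let S := f.1.1; let i := f.1.2
  if b then
    [(S, insert i S), (insert i S, insert (i + 1) (insert i S)),
      (insert (i + 1) (insert i S), insert (i + 1) S), (insert (i + 1) S, S)]
  else
    [(insert i S, S), (insert (i + 1) (insert i S), insert i S),
      (insert (i + 1) S, insert (i + 1) (insert i S)), (S, insert (i + 1) S)]

/-- Adjacency of vertices of the cube complex: they differ by inserting one element. -/
def cubeVertexAdj {n : ℕ} (A B : Finset (ZMod n)) : Prop :=
  ∃ k : ZMod n, (k ∉ A ∧ B = insert k A) ∨ (k ∉ B ∧ A = insert k B)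

/-!
Every edge `(S, k)` lies in exactly two squares: the one in directions `k, k + 1` with base
`S \ {k + 1}` and the one in directions `k - 1, k` with base `S \ {k - 1}`. Likewise
`S \ {k, k + 1}` is the base of a square with corner `S` in directions `k, k + 1`, so the link of
every vertex is the whole `n`-cycle of directions. Orienting the square with base `T`
by the parity of `|T|` (the sign `(-1)^|T|` of the cubical boundary operator) makes these two
squares induce opposite directions on their common edge. Finally `V = 2^n`, `E = n 2^(n-1)` and
`F = n 2^(n-2)`: edges and squares in given directions correspond to the subsets avoiding them.
-/

theorem Finset.decide_even_card_erase {α : Type*} [DecidableEq α] {s : Finset α} {a : α}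
    (h : a ∈ s) : decide (Even (s.erase a).card) = !decide (Even s.card) := by
  rw [← Finset.card_erase_add_one h]
  simp [Nat.even_add_one, -Nat.not_even_iff_odd]

theorem Fintype.card_finset_disjoint {α : Type*} [Fintype α] [DecidableEq α] (s : Finset α) :
    Fintype.card {T : Finset α // Disjoint s T} = 2 ^ (Fintype.card α - s.card) := by
  rw [Fintype.card_subtype, ← Finset.card_compl, ← Finset.card_powerset]
  congr 1
  ext T
  simp [Finset.subset_compl_iff_disjoint_left]

section

variable {n : ℕ}

theorem ZMod.add_one_ne_sub_one (hn : 3 ≤ n) (k : ZMod n) : k + 1 ≠ k - 1 := by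
  intro h
  have h2 : ((2 : ℕ) : ZMod n) = 0 := by
    push_cast
    linear_combination h
  have := Nat.le_of_dvd two_pos ((ZMod.natCast_eq_zero_iff 2 n).1 h2)
  omega

def CubeFace.parityOrientation (f : CubeFace n) : Bool := decide (Even f.1.1.card)

namespace CubeEdge

def succFace (e : CubeEdge n) : CubeFace n :=
  ⟨(e.1.1.erase (e.1.2 + 1), e.1.2), fun h => e.2 (Finset.mem_of_mem_erase h),
    Finset.notMem_erase _ _⟩

def predFace (e : CubeEdge n) : CubeFace n :=
  ⟨(e.1.1.erase (e.1.2 - 1), e.1.2 - 1), Finset.notMem_erase _ _, by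
    rw [sub_add_cancel]; exact fun h => e.2 (Finset.mem_of_mem_erase h)⟩

theorem succFace_ne_predFace (h1 : (1 : ZMod n) ≠ 0) (e : CubeEdge n) :
    e.succFace ≠ e.predFace := fun h => h1 <| by
  have hdir : e.1.2 = e.1.2 - 1 := congrArg (fun f : CubeFace n => f.1.2) h
  linear_combination hdir

theorem edgeInFace_iff (e : CubeEdge n) (f : CubeFace n) :
    edgeInFace e f ↔ f = e.succFace ∨ f = e.predFace := by
  obtain ⟨⟨S, k⟩, hk⟩ := e
  constructor
  · obtain ⟨⟨T, i⟩, hi, hi1⟩ := f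
    rintro (h | h | h | h) <;> obtain ⟨rfl, rfl⟩ := Prod.mk.inj h
    · exact .inl <| Subtype.ext <| by simp [succFace, Finset.erase_eq_of_notMem hi1]
    · exact .inr <| Subtype.ext <| by simp [predFace, Finset.erase_eq_of_notMem hi]
    · exact .inr <| Subtype.ext <| by simp [predFace, Finset.erase_insert hi]
    · exact .inl <| Subtype.ext <| by simp [succFace, Finset.erase_insert hi1]
  · rintro (rfl | rfl)
    · by_cases h : k + 1 ∈ S
      · exact .inr <| .inr <| .inr <| by simp [succFace, Finset.insert_erase h]
      · exact .inl <| by simp [succFace, Finset.erase_eq_of_notMem h]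
    · by_cases h : k - 1 ∈ S
      · exact .inr <| .inr <| .inl <| by simp [predFace, Finset.insert_erase h]
      · exact .inr <| .inl <| by simp [predFace, Finset.erase_eq_of_notMem h]

def traverse (e : CubeEdge n) : Bool → Finset (ZMod n) × Finset (ZMod n)
  | true => (e.1.1, insert e.1.2 e.1.1)
  | false => (insert e.1.2 e.1.1, e.1.1)

theorem traverse_mem_succFace (e : CubeEdge n) :
    e.traverse (decide (Even e.1.1.card)) ∈
      orientedBoundary e.succFace e.succFace.parityOrientation := by
  obtain ⟨⟨S, k⟩, hk⟩ := e
  by_cases h : k + 1 ∈ S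
  · have hpar : (succFace ⟨(S, k), hk⟩).parityOrientation = !decide (Even S.card) :=
      Finset.decide_even_card_erase h
    rw [hpar]
    cases decide (Even S.card) <;>
      simp [traverse, orientedBoundary, succFace, Finset.insert_erase h, Finset.insert_comm]
  · have hS : S.erase (k + 1) = S := Finset.erase_eq_of_notMem h
    by_cases hE : Even S.card <;>
      simp [traverse, orientedBoundary, succFace, CubeFace.parityOrientation, hS, hE]

theorem traverse_mem_predFace (e : CubeEdge n) :
    e.traverse (!decide (Even e.1.1.card)) ∈
      orientedBoundary e.predFace e.predFace.parityOrientation := by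
  obtain ⟨⟨S, k⟩, hk⟩ := e
  by_cases h : k - 1 ∈ S
  · have hpar : (predFace ⟨(S, k), hk⟩).parityOrientation = !decide (Even S.card) :=
      Finset.decide_even_card_erase h
    rw [hpar]
    cases decide (Even S.card) <;>
      simp [traverse, orientedBoundary, predFace, Finset.insert_erase h]
  · have hS : S.erase (k - 1) = S := Finset.erase_eq_of_notMem h
    by_cases hE : Even S.card <;>
      simp [traverse, orientedBoundary, predFace, CubeFace.parityOrientation, hS, hE]

theorem orientedBoundary_succFace_predFace (e : CubeEdge n) :
    (e.traverse true ∈ orientedBoundary e.succFace e.succFace.parityOrientation ∧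
      e.traverse false ∈ orientedBoundary e.predFace e.predFace.parityOrientation) ∨
    (e.traverse false ∈ orientedBoundary e.succFace e.succFace.parityOrientation ∧
      e.traverse true ∈ orientedBoundary e.predFace e.predFace.parityOrientation) := by
  have hsucc := e.traverse_mem_succFace
  have hpred := e.traverse_mem_predFace
  by_cases hE : Even e.1.1.card
  · simp only [hE, decide_true, Bool.not_true] at hsucc hpred
    exact .inl ⟨hsucc, hpred⟩
  · simp only [hE, decide_false, Bool.not_false] at hsucc hpred
    exact .inr ⟨hsucc, hpred⟩

end CubeEdge

theorem exists_isCorner (S : Finset (ZMod n)) (k : ZMod n) :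
    ∃ f : CubeFace n, isCorner S f ∧ f.1.2 = k := by
  refine ⟨⟨((S.erase k).erase (k + 1), k),
    fun h => Finset.notMem_erase k S (Finset.mem_of_mem_erase h),
    Finset.notMem_erase _ _⟩, ?_, rfl⟩
  simp only [isCorner]
  by_cases hk : k ∈ S <;> by_cases hk1 : k + 1 ∈ S <;>
    [refine .inr (.inr (.inr ?_)); refine .inr (.inl ?_);
      refine .inr (.inr (.inl ?_)); refine .inl ?_] <;>
    · ext a
      by_cases a = k <;> by_cases a = k + 1 <;> simp_all

theorem linkAdj_iff {S : Finset (ZMod n)} {k k' : ZMod n} :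
    linkAdj S k k' ↔ k' = k + 1 ∨ k' = k - 1 := by
  constructor
  · rintro ⟨f, -, ⟨rfl, rfl⟩ | ⟨rfl, rfl⟩⟩
    · exact .inl rfl
    · exact .inr (add_sub_cancel_right _ _).symm
  · rintro (rfl | rfl)
    · obtain ⟨f, hf, rfl⟩ := exists_isCorner S k
      exact ⟨f, hf, .inl ⟨rfl, rfl⟩⟩
    · obtain ⟨f, hf, hk⟩ := exists_isCorner S (k - 1)
      exact ⟨f, hf, .inr ⟨hk.symm, by rw [hk, sub_add_cancel]⟩⟩

theorem linkAdj_reflTransGen [NeZero n] (S : Finset (ZMod n)) (k k' : ZMod n) :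
    Relation.ReflTransGen (linkAdj S) k k' := by
  have walk : ∀ m : ℕ, Relation.ReflTransGen (linkAdj S) k (k + m) := by
    intro m
    induction m with
    | zero => simpa using .refl
    | succ m ih =>
      rw [Nat.cast_succ, ← add_assoc]
      exact ih.tail (linkAdj_iff.2 (.inl rfl))
  simpa using walk (k' - k).val

instance : Std.Symm (cubeVertexAdj (n := n)) := ⟨fun _ _ ⟨k, h⟩ => ⟨k, h.symm⟩⟩

theorem cubeVertexAdj_reflTransGen (A B : Finset (ZMod n)) :
    Relation.ReflTransGen cubeVertexAdj A B := by
  have toEmpty : ∀ C : Finset (ZMod n), Relation.ReflTransGen cubeVertexAdj C ∅ := by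
    intro C
    induction C using Finset.induction_on with
    | empty => exact .refl
    | insert a s ha ih => exact .head ⟨a, .inr ⟨ha, rfl⟩⟩ ih
  exact (toEmpty A).trans (Std.Symm.symm _ _ (toEmpty B))

def CubeEdge.equivSigma :
    CubeEdge n ≃ Σ k : ZMod n, {S : Finset (ZMod n) // Disjoint {k} S} where
  toFun e := ⟨e.1.2, e.1.1, Finset.disjoint_singleton_left.2 e.2⟩
  invFun x := ⟨(x.2.1, x.1), Finset.disjoint_singleton_left.1 x.2.2⟩

def CubeFace.equivSigma :
    CubeFace n ≃ Σ i : ZMod n, {S : Finset (ZMod n) // Disjoint {i, i + 1} S} where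
  toFun f := ⟨f.1.2, f.1.1, by simpa [Finset.disjoint_insert_left] using f.2⟩
  invFun x := ⟨(x.2.1, x.1), by simpa [Finset.disjoint_insert_left] using x.2.2⟩

theorem CubeEdge.card [NeZero n] : Fintype.card (CubeEdge n) = n * 2 ^ (n - 1) := by
  rw [Fintype.card_congr CubeEdge.equivSigma, Fintype.card_sigma]
  simp only [Fintype.card_finset_disjoint, Finset.card_singleton, Finset.sum_const,
    Finset.card_univ, ZMod.card, smul_eq_mul]

theorem CubeFace.card [NeZero n] (h1 : (1 : ZMod n) ≠ 0) :
    Fintype.card (CubeFace n) = n * 2 ^ (n - 2) := by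
  have hne (i : ZMod n) : i ∉ ({i + 1} : Finset (ZMod n)) :=
    Finset.notMem_singleton.2 fun h => h1 (by linear_combination -h)
  rw [Fintype.card_congr CubeFace.equivSigma, Fintype.card_sigma]
  simp only [Fintype.card_finset_disjoint, Finset.card_insert_of_notMem (hne _),
    Finset.card_singleton, Finset.sum_const, Finset.card_univ, ZMod.card, smul_eq_mul]

theorem cubeComplex_eulerChar_eq [NeZero n] (hn : 2 ≤ n) :
    (Fintype.card (Finset (ZMod n)) : ℤ) - Fintype.card (CubeEdge n) +
      Fintype.card (CubeFace n) = (4 - (n : ℤ)) * 2 ^ (n - 2) := by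
  have : Fact (1 < n) := ⟨hn⟩
  rw [Fintype.card_finset, ZMod.card, CubeEdge.card, CubeFace.card one_ne_zero]
  obtain ⟨m, rfl⟩ : ∃ m, n = m + 2 := ⟨n - 2, by omega⟩
  rw [Nat.add_sub_cancel, show m + 2 - 1 = m + 1 by omega]
  push_cast
  ring

end

/-- The complex `Y` associated with the `n`-cycle (`n ≥ 5`) — the subcomplex of the
`n`-cube on square faces in cyclically adjacent coordinate directions — is a closed
connected orientable surface (every edge lies in exactly two squares, the link of every
vertex is a single cycle, and the squares can be coherently oriented) with Euler
characteristic `(4 − n)·2^(n−2)`, hence of genus `1 + (n − 4)·2^(n−3)`. -/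
theorem stmt19 (n : ℕ) [NeZero n] (hn : 5 ≤ n) :
    (∀ e : CubeEdge n, ∃ f₁ f₂ : CubeFace n, f₁ ≠ f₂ ∧ edgeInFace e f₁ ∧ edgeInFace e f₂ ∧
      ∀ f : CubeFace n, edgeInFace e f → f = f₁ ∨ f = f₂) ∧
    (∀ S : Finset (ZMod n),
      (∀ k k' : ZMod n, Relation.ReflTransGen (linkAdj S) k k') ∧
      (∀ k : ZMod n, ∃ a b : ZMod n, a ≠ b ∧ linkAdj S k a ∧ linkAdj S k b ∧
        ∀ c : ZMod n, linkAdj S k c → c = a ∨ c = b)) ∧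
    (∀ A B : Finset (ZMod n), Relation.ReflTransGen cubeVertexAdj A B) ∧
    (∃ or : CubeFace n → Bool, ∀ (e : CubeEdge n) (f₁ f₂ : CubeFace n), f₁ ≠ f₂ →
      edgeInFace e f₁ → edgeInFace e f₂ →
        (((e.1.1, insert e.1.2 e.1.1) ∈ orientedBoundary f₁ (or f₁) ∧
          (insert e.1.2 e.1.1, e.1.1) ∈ orientedBoundary f₂ (or f₂)) ∨
         ((insert e.1.2 e.1.1, e.1.1) ∈ orientedBoundary f₁ (or f₁) ∧
          (e.1.1, insert e.1.2 e.1.1) ∈ orientedBoundary f₂ (or f₂)))) ∧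
    ((Fintype.card (Finset (ZMod n)) : ℤ) - Fintype.card (CubeEdge n) +
        Fintype.card (CubeFace n) = (4 - (n : ℤ)) * 2 ^ (n - 2)) ∧
    (∃ g : ℕ, (g : ℤ) = 1 + ((n : ℤ) - 4) * 2 ^ (n - 3) ∧
      (Fintype.card (Finset (ZMod n)) : ℤ) - Fintype.card (CubeEdge n) +
        Fintype.card (CubeFace n) = 2 - 2 * (g : ℤ)) := by
  have h1 : (1 : ZMod n) ≠ 0 := by
    have : Fact (1 < n) := ⟨by omega⟩
    exact one_ne_zero
  have hg : ((1 + (n - 4) * 2 ^ (n - 3) : ℕ) : ℤ) = 1 + ((n : ℤ) - 4) * 2 ^ (n - 3) := by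
    push_cast [show 4 ≤ n by omega]
    ring
  refine ⟨fun e => ⟨e.succFace, e.predFace, e.succFace_ne_predFace h1,
      (e.edgeInFace_iff _).2 (.inl rfl), (e.edgeInFace_iff _).2 (.inr rfl),
      fun f => (e.edgeInFace_iff f).1⟩,
    fun S => ⟨linkAdj_reflTransGen S, fun k => ⟨k + 1, k - 1,
      ZMod.add_one_ne_sub_one (by omega) k,
      linkAdj_iff.2 (.inl rfl), linkAdj_iff.2 (.inr rfl), fun _ => linkAdj_iff.1⟩⟩,
    cubeVertexAdj_reflTransGen, ⟨CubeFace.parityOrientation, ?_⟩,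
    cubeComplex_eulerChar_eq (by omega), ⟨_, hg, ?_⟩⟩
  · intro e f₁ f₂ hne h₁ h₂
    rcases (e.edgeInFace_iff f₁).1 h₁ with rfl | rfl <;>
      rcases (e.edgeInFace_iff f₂).1 h₂ with rfl | rfl
    · exact absurd rfl hne
    · exact e.orientedBoundary_succFace_predFace
    · exact e.orientedBoundary_succFace_predFace.symm.imp And.symm And.symm
    · exact absurd rfl hne
  · rw [cubeComplex_eulerChar_eq (by omega), hg, show n - 2 = n - 3 + 1 by omega, pow_succ]
    ring
end
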